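/- arXiv:2404.09720 — 7 statements merged into one kernel-verified Lean document; each statement's English description precedes it below -/
import Mathlib

section
/- Let F ⊆ binom([n],k) be a k-graph and 1 ≤ x < y ≤ n. Then |S_{x,y}(F)| = |F|, every member of S_{x,y}(F) has exactly k elements, and ν(S_{x,y}(F)) ≤ ν(F). -/
/-- The `(x,y)`-shift of a single edge `A` with respect to the family `F`. -/
def shiftEdge (x y : ℕ) (F : Finset (Finset ℕ)) (A : Finset ℕ) : Finset ℕ :=
  if y ∈ A ∧ x ∉ A ∧ insert x (A.erase y) ∉ F then insert x (A.erase y) else A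

/-- The `(x,y)`-shift of a family `F`. -/
def shiftFam (x y : ℕ) (F : Finset (Finset ℕ)) : Finset (Finset ℕ) :=
  F.image (shiftEdge x y F)

/-- The matching number: the largest size of a pairwise-disjoint subfamily. -/
noncomputable def matchingNumber (F : Finset (Finset ℕ)) : ℕ :=
  sSup {m | ∃ M ⊆ F, M.card = m ∧ (M : Set (Finset ℕ)).PairwiseDisjoint id}

/-- `F` is non-trivial on `[n]`: no vertex of `[n] = {1,…,n}` is isolated. -/
def NonTrivial (n : ℕ) (F : Finset (Finset ℕ)) : Prop :=
  ∀ v ∈ Finset.Icc 1 n, ∃ A ∈ F, v ∈ A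

/-- `F` is shifted on `Y`: all `(x,y)`-shifts with `x < y` in `Y` fix `F`. -/
def ShiftedOn (Y : Finset ℕ) (F : Finset (Finset ℕ)) : Prop :=
  ∀ x ∈ Y, ∀ y ∈ Y, x < y → shiftFam x y F = F

/-- The clique number of the `k`-graph `F` on `[n]`. -/
noncomputable def cliqueNum (n k : ℕ) (F : Finset (Finset ℕ)) : ℕ :=
  sSup {m | ∃ U ⊆ Finset.Icc 1 n, U.card = m ∧ Finset.powersetCard k U ⊆ F}

/-- The vertex-cover number of the `k`-graph `F` on `[n]`. -/
noncomputable def coverNum (n : ℕ) (F : Finset (Finset ℕ)) : ℕ :=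
  sInf {t | ∃ T ⊆ Finset.Icc 1 n, T.card = t ∧ ∀ A ∈ F, (A ∩ T).Nonempty}

/-- The link `N_F(x)`. -/
def nbr (F : Finset (Finset ℕ)) (x : ℕ) : Finset (Finset ℕ) :=
  (F.filter fun A => x ∈ A).image fun A => A.erase x

/-- The link `N_F(x,y)`. -/
def nbr2 (F : Finset (Finset ℕ)) (x y : ℕ) : Finset (Finset ℕ) :=
  (F.filter fun A => x ∈ A ∧ y ∈ A).image fun A => (A.erase x).erase y

/-- The link `N_F(x, ȳ)`. -/
def nbrBar (F : Finset (Finset ℕ)) (x y : ℕ) : Finset (Finset ℕ) :=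
  (F.filter fun A => x ∈ A ∧ y ∉ A).image fun A => A.erase x

/-- The extremal family `E₀(n,k,s)`. -/
def E0 (n k s : ℕ) : Finset (Finset ℕ) :=
  Finset.powersetCard k (Finset.Icc 1 (k * s + k - 2)) ∪
  ((Finset.powersetCard k (Finset.Icc 1 n)).filter
    (fun A => A \ Finset.Icc 1 (k * s + k - 2) = {k * s + k - 1} ∧
      (A ∩ Finset.Icc 1 (k - 1)).Nonempty)) ∪
  ((Finset.Icc (k * s + k) n).image (fun x => insert x (Finset.Icc 1 (k - 1))))

open Classical in
/-- The extremal family `E₁(n,k,s)`. -/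
noncomputable def E1 (n k s : ℕ) : Finset (Finset ℕ) :=
  Finset.powersetCard k (Finset.Icc 1 (k * s + k - 2)) ∪
  ((Finset.powersetCard k (Finset.Icc 1 n)).filter
    (fun A => 1 ∈ A ∧ ∃ x ∈ Finset.Icc (k * s + k - 1) n,
      A \ Finset.Icc 1 (k * s + k - 2) = {x}))

/-- `F` is `s`-saturated on `[n]`. -/
def Saturated (n k s : ℕ) (F : Finset (Finset ℕ)) : Prop :=
  matchingNumber F ≤ s ∧
  ∀ G ∈ Finset.powersetCard k (Finset.Icc 1 n), G ∉ F →
    matchingNumber (insert G F) = s + 1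


lemma shiftEdge_spec (x y : ℕ) (F : Finset (Finset ℕ)) (A : Finset ℕ) :
    shiftEdge x y F A = A ∨
    (y ∈ A ∧ x ∉ A ∧ insert x (A.erase y) ∉ F ∧
      shiftEdge x y F A = insert x (A.erase y)) := by
  unfold shiftEdge; split <;> tauto

lemma card_shiftEdge (x y : ℕ) (F : Finset (Finset ℕ)) (A : Finset ℕ) :
    (shiftEdge x y F A).card = A.card := by
  rcases shiftEdge_spec x y F A with h | ⟨hyA, hxA, _, h⟩
  · rw [h]
  · have hx' : x ∉ A.erase y := fun hc => hxA (Finset.mem_of_mem_erase hc)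
    rw [h, Finset.card_insert_of_notMem hx', Finset.card_erase_add_one hyA]

lemma shiftEdge_injOn (x y : ℕ) (F : Finset (Finset ℕ)) :
    Set.InjOn (shiftEdge x y F) F := by
  intro A hA B hB hAB
  rcases shiftEdge_spec x y F A with h1 | ⟨hyA, hxA, hiA, h1⟩ <;>
    rcases shiftEdge_spec x y F B with h2 | ⟨hyB, hxB, hiB, h2⟩
  · rwa [h1, h2] at hAB
  · rw [h1, h2] at hAB
    exact absurd (hAB ▸ hA) hiB
  · rw [h1, h2] at hAB
    exact absurd (hAB ▸ hB) hiA
  · rw [h1, h2] at hAB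
    have hx1 : x ∉ A.erase y := fun hc => hxA (Finset.mem_of_mem_erase hc)
    have hx2 : x ∉ B.erase y := fun hc => hxB (Finset.mem_of_mem_erase hc)
    have : A.erase y = B.erase y := by
      rw [← Finset.erase_insert hx1, ← Finset.erase_insert hx2, hAB]
    rw [← Finset.insert_erase hyA, ← Finset.insert_erase hyB, this]

lemma mem_shiftFam_elim {x y : ℕ} {F : Finset (Finset ℕ)} {A : Finset ℕ}
    (hA : A ∈ shiftFam x y F) (hx : x ∉ A) :
    A ∈ F ∧ (y ∈ A → insert x (A.erase y) ∈ F) := by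
  obtain ⟨B, hB, hBA⟩ := Finset.mem_image.mp hA
  rcases shiftEdge_spec x y F B with h | ⟨hyB, hxB, hiB, h⟩
  · rw [h] at hBA; subst hBA
    refine ⟨hB, fun hyA => ?_⟩
    by_contra hins
    have h2 : shiftEdge x y F B = insert x (B.erase y) := if_pos ⟨hyA, hx, hins⟩
    rw [h] at h2
    exact hx (h2 ▸ Finset.mem_insert_self x (B.erase y))
  · rw [h] at hBA
    exact absurd (hBA ▸ Finset.mem_insert_self x (B.erase y)) hx

lemma mem_shiftFam_notMem {x y : ℕ} (hxy : x ≠ y) {F : Finset (Finset ℕ)} {A : Finset ℕ}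
    (hA : A ∈ shiftFam x y F) (hA' : A ∉ F) :
    x ∈ A ∧ y ∉ A ∧ insert y (A.erase x) ∈ F := by
  obtain ⟨B, hB, hBA⟩ := Finset.mem_image.mp hA
  rcases shiftEdge_spec x y F B with h | ⟨hyB, hxB, hiB, h⟩
  · rw [h] at hBA; exact absurd (hBA ▸ hB) hA'
  · rw [h] at hBA; subst hBA
    have hx1 : x ∉ B.erase y := fun hc => hxB (Finset.mem_of_mem_erase hc)
    refine ⟨Finset.mem_insert_self _ _, ?_, ?_⟩
    · intro hyc
      rcases Finset.mem_insert.mp hyc with h' | h'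
      · exact hxy h'.symm
      · exact (Finset.notMem_erase y B) h'
    · rw [Finset.erase_insert hx1, Finset.insert_erase hyB]
      exact hB

lemma matching_transfer {x y : ℕ} (hxy : x ≠ y) {F M : Finset (Finset ℕ)}
    (hM : M ⊆ shiftFam x y F) (hd : (M : Set (Finset ℕ)).PairwiseDisjoint id) :
    ∃ M' ⊆ F, M'.card = M.card ∧ (M' : Set (Finset ℕ)).PairwiseDisjoint id := by
  by_cases hMF : M ⊆ F
  · exact ⟨M, hMF, rfl, hd⟩
  · obtain ⟨A₀, hA₀M, hA₀F⟩ : ∃ A ∈ M, A ∉ F := by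
      by_contra hc; push_neg at hc; exact hMF hc
    obtain ⟨hxA₀, hyA₀, hB₀⟩ := mem_shiftFam_notMem hxy (hM hA₀M) hA₀F
    set B₀ := insert y (A₀.erase x) with hB₀def
    have hdisj : ∀ C ∈ M, ∀ D ∈ M, C ≠ D → Disjoint C D := fun C hC D hD hne =>
      hd (Finset.mem_coe.mpr hC) (Finset.mem_coe.mpr hD) hne
    have hother : ∀ C ∈ M, C ≠ A₀ → x ∉ C := by
      intro C hC hne hxC
      exact (Finset.disjoint_left.mp (hdisj C hC A₀ hA₀M hne)) hxC hxA₀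
    have hotherF : ∀ C ∈ M, C ≠ A₀ → C ∈ F := fun C hC hne =>
      (mem_shiftFam_elim (hM hC) (hother C hC hne)).1
    have hyB₀ : y ∈ B₀ := Finset.mem_insert_self _ _
    have hB₀sub : ∀ a ∈ B₀, a = y ∨ a ∈ A₀ := by
      intro a ha
      rcases Finset.mem_insert.mp ha with h | h
      · exact Or.inl h
      · exact Or.inr (Finset.mem_of_mem_erase h)
    have hxB₀ : x ∉ B₀ := by
      intro hc
      rcases Finset.mem_insert.mp hc with h | h
      · exact hxy h
      · exact (Finset.notMem_erase x A₀) h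
    by_cases hyM : ∃ C ∈ M, C ≠ A₀ ∧ y ∈ C
    · obtain ⟨C, hCM, hCne, hyC⟩ := hyM
      have hxC := hother C hCM hCne
      have hCF := hotherF C hCM hCne
      have hC'F : insert x (C.erase y) ∈ F := (mem_shiftFam_elim (hM hCM) hxC).2 hyC
      set C' := insert x (C.erase y) with hC'def
      have hxC' : x ∈ C' := Finset.mem_insert_self _ _
      have hC'sub : ∀ a ∈ C', a = x ∨ a ∈ C := by
        intro a ha
        rcases Finset.mem_insert.mp ha with h | h
        · exact Or.inl h
        · exact Or.inr (Finset.mem_of_mem_erase h)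
      have hyC' : y ∉ C' := by
        intro hc
        rcases Finset.mem_insert.mp hc with h | h
        · exact hxy h.symm
        · exact (Finset.notMem_erase y C) h
      -- members of the remainder
      have hrest : ∀ E ∈ (M.erase A₀).erase C, E ∈ M ∧ E ≠ A₀ ∧ E ≠ C ∧ x ∉ E ∧ y ∉ E := by
        intro E hE
        have h1 := Finset.mem_erase.mp hE
        have h2 := Finset.mem_erase.mp h1.2
        refine ⟨h2.2, h2.1, h1.1, hother E h2.2 h2.1, fun hyE => ?_⟩
        exact (Finset.disjoint_left.mp (hdisj E h2.2 C hCM h1.1)) hyE hyC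
      have dB₀C' : Disjoint B₀ C' := by
        rw [Finset.disjoint_left]
        intro a ha hc
        rcases hB₀sub a ha with rfl | haA₀
        · exact hyC' hc
        · rcases hC'sub a hc with rfl | haC
          · exact hxB₀ ha
          · exact (Finset.disjoint_left.mp (hdisj A₀ hA₀M C hCM (Ne.symm hCne))) haA₀ haC
      have dB₀E : ∀ E ∈ (M.erase A₀).erase C, Disjoint B₀ E := by
        intro E hE
        obtain ⟨hEM, hEA₀, hEC, hxE, hyE⟩ := hrest E hE
        rw [Finset.disjoint_left]
        intro a ha hc
        rcases hB₀sub a ha with rfl | haA₀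
        · exact hyE hc
        · exact (Finset.disjoint_left.mp (hdisj A₀ hA₀M E hEM (Ne.symm hEA₀))) haA₀ hc
      have dC'E : ∀ E ∈ (M.erase A₀).erase C, Disjoint C' E := by
        intro E hE
        obtain ⟨hEM, hEA₀, hEC, hxE, hyE⟩ := hrest E hE
        rw [Finset.disjoint_left]
        intro a ha hc
        rcases hC'sub a ha with rfl | haC
        · exact hxE hc
        · exact (Finset.disjoint_left.mp (hdisj C hCM E hEM (Ne.symm hEC))) haC hc
      have hB₀ne : B₀ ∉ insert C' ((M.erase A₀).erase C) := by
        intro hc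
        rcases Finset.mem_insert.mp hc with h | h
        · exact hyC' (h ▸ hyB₀)
        · exact (hrest B₀ h).2.2.2.2 hyB₀
      have hC'ne : C' ∉ (M.erase A₀).erase C := fun hc => (hrest C' hc).2.2.2.1 hxC'
      refine ⟨insert B₀ (insert C' ((M.erase A₀).erase C)), ?_, ?_, ?_⟩
      · intro E hE
        rcases Finset.mem_insert.mp hE with rfl | hE
        · exact hB₀
        rcases Finset.mem_insert.mp hE with rfl | hE
        · exact hC'F
        · exact hotherF E (hrest E hE).1 (hrest E hE).2.1
      · rw [Finset.card_insert_of_notMem hB₀ne, Finset.card_insert_of_notMem hC'ne,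
          Finset.card_erase_add_one (Finset.mem_erase.mpr ⟨hCne, hCM⟩),
          Finset.card_erase_add_one hA₀M]
      · intro a ha b hb hab
        simp only [Finset.coe_insert, Set.mem_insert_iff, Finset.mem_coe] at ha hb
        rcases ha with rfl | rfl | ha <;> rcases hb with rfl | rfl | hb
        · exact absurd rfl hab
        · exact dB₀C'
        · exact dB₀E _ hb
        · exact dB₀C'.symm
        · exact absurd rfl hab
        · exact dC'E _ hb
        · exact (dB₀E _ ha).symm
        · exact (dC'E _ ha).symm
        · exact hdisj _ (hrest _ ha).1 _ (hrest _ hb).1 hab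
    · push_neg at hyM
      have hrest : ∀ E ∈ M.erase A₀, E ∈ M ∧ E ≠ A₀ ∧ x ∉ E ∧ y ∉ E := by
        intro E hE
        have h1 := Finset.mem_erase.mp hE
        exact ⟨h1.2, h1.1, hother E h1.2 h1.1, hyM E h1.2 h1.1⟩
      have dB₀E : ∀ E ∈ M.erase A₀, Disjoint B₀ E := by
        intro E hE
        obtain ⟨hEM, hEA₀, hxE, hyE⟩ := hrest E hE
        rw [Finset.disjoint_left]
        intro a ha hc
        rcases hB₀sub a ha with rfl | haA₀
        · exact hyE hc
        · exact (Finset.disjoint_left.mp (hdisj A₀ hA₀M E hEM (Ne.symm hEA₀))) haA₀ hc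
      have hB₀ne : B₀ ∉ M.erase A₀ := fun hc => (hrest B₀ hc).2.2.2 hyB₀
      refine ⟨insert B₀ (M.erase A₀), ?_, ?_, ?_⟩
      · intro E hE
        rcases Finset.mem_insert.mp hE with rfl | hE
        · exact hB₀
        · exact hotherF E (hrest E hE).1 (hrest E hE).2.1
      · rw [Finset.card_insert_of_notMem hB₀ne, Finset.card_erase_add_one hA₀M]
      · intro a ha b hb hab
        simp only [Finset.coe_insert, Set.mem_insert_iff, Finset.mem_coe] at ha hb
        rcases ha with rfl | ha <;> rcases hb with rfl | hb
        · exact absurd rfl hab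
        · exact dB₀E _ hb
        · exact (dB₀E _ ha).symm
        · exact hdisj _ (hrest _ ha).1 _ (hrest _ hb).1 hab

/-- basic properties of the `(x,y)`-shift. -/
theorem stmt3 (n k x y : ℕ) (F : Finset (Finset ℕ))
    (hF : F ⊆ Finset.powersetCard k (Finset.Icc 1 n))
    (hx : 1 ≤ x) (hxy : x < y) (hy : y ≤ n) :
    (shiftFam x y F).card = F.card ∧
    (∀ A ∈ shiftFam x y F, A.card = k) ∧
    matchingNumber (shiftFam x y F) ≤ matchingNumber F := by
  have hxyne : x ≠ y := Nat.ne_of_lt hxy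
  refine ⟨Finset.card_image_of_injOn (shiftEdge_injOn x y F), ?_, ?_⟩
  · intro A hA
    obtain ⟨B, hB, rfl⟩ := Finset.mem_image.mp hA
    rw [card_shiftEdge]
    exact (Finset.mem_powersetCard.mp (hF hB)).2
  · unfold matchingNumber
    apply csSup_le
    · exact ⟨0, ∅, Finset.empty_subset _, Finset.card_empty, by simp⟩
    · rintro m ⟨M, hMsub, rfl, hdM⟩
      obtain ⟨M', hM'F, hcard, hd'⟩ := matching_transfer hxyne hMsub hdM
      have hBdd : BddAbove {m | ∃ M ⊆ F, M.card = m ∧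
          (M : Set (Finset ℕ)).PairwiseDisjoint id} := by
        refine ⟨F.card, ?_⟩
        rintro m ⟨N, hN, rfl, -⟩
        exact Finset.card_le_card hN
      exact hcard ▸ le_csSup hBdd ⟨M', hM'F, rfl, hd'⟩
end

section
/- Let F ⊆ binom([n],k) be non-trivial and 1 ≤ x < y ≤ n. If the family F̃ := S_{x,y}(F) has an isolated vertex (some vertex of [n] belongs to no member of F̃), then N_F(x,y) = ∅ and |N_F(x,ȳ)| + |N_F(y,x̄)| ≤ C(n−2, k−1). -/
/-- if a shift creates an isolated vertex, the links of `x` and `y` are small. -/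
theorem stmt5 (n k x y : ℕ) (F : Finset (Finset ℕ))
    (hF : F ⊆ Finset.powersetCard k (Finset.Icc 1 n))
    (hnt : NonTrivial n F)
    (hx : 1 ≤ x) (hxy : x < y) (hy : y ≤ n)
    (hiso : ∃ v ∈ Finset.Icc 1 n, ∀ A ∈ shiftFam x y F, v ∉ A) :
    nbr2 F x y = ∅ ∧
    (nbrBar F x y).card + (nbrBar F y x).card ≤ Nat.choose (n - 2) (k - 1) := by
  obtain ⟨v, hv, hviso⟩ := hiso
  have hvy : v = y := by
    obtain ⟨A, hA, hvA⟩ := hnt v hv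
    have h2 := hviso _ (Finset.mem_image_of_mem _ hA)
    by_contra hne
    apply h2
    unfold shiftEdge
    split
    · exact Finset.mem_insert_of_mem (Finset.mem_erase.mpr ⟨hne, hvA⟩)
    · exact hvA
  rw [hvy] at hviso
  have hshift : ∀ A ∈ F, y ∈ A → x ∉ A ∧ insert x (A.erase y) ∉ F := by
    intro A hA hyA
    have h2 := hviso _ (Finset.mem_image_of_mem (shiftEdge x y F) hA)
    by_contra hc
    apply h2
    unfold shiftEdge
    rw [if_neg]
    · exact hyA
    · rintro ⟨_, hx', hins⟩; exact hc ⟨hx', hins⟩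
  have hpart1 : nbr2 F x y = ∅ := by
    unfold nbr2
    rw [Finset.image_eq_empty, Finset.filter_eq_empty_iff]
    intro A hA h
    exact (hshift A hA h.2).1 h.1
  refine ⟨hpart1, ?_⟩
  set S := ((Finset.Icc 1 n).erase x).erase y with hS
  have hxmem : x ∈ Finset.Icc 1 n := Finset.mem_Icc.mpr ⟨hx, le_trans hxy.le hy⟩
  have hymem : y ∈ (Finset.Icc 1 n).erase x :=
    Finset.mem_erase.mpr ⟨hxy.ne', Finset.mem_Icc.mpr ⟨le_trans hx hxy.le, hy⟩⟩
  have hScard : S.card = n - 2 := by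
    rw [hS, Finset.card_erase_of_mem hymem, Finset.card_erase_of_mem hxmem, Nat.card_Icc]
    omega
  have hsub1 : nbrBar F x y ⊆ Finset.powersetCard (k - 1) S := by
    intro B hB
    simp only [nbrBar, Finset.mem_image, Finset.mem_filter] at hB
    obtain ⟨A, ⟨hA, hxA, hyA⟩, rfl⟩ := hB
    have hAk := hF hA
    rw [Finset.mem_powersetCard] at hAk ⊢
    constructor
    · intro z hz
      rw [Finset.mem_erase] at hz
      refine Finset.mem_erase.mpr ⟨?_, Finset.mem_erase.mpr ⟨hz.1, hAk.1 hz.2⟩⟩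
      rintro rfl; exact hyA hz.2
    · rw [Finset.card_erase_of_mem hxA, hAk.2]
  have hsub2 : nbrBar F y x ⊆ Finset.powersetCard (k - 1) S := by
    intro B hB
    simp only [nbrBar, Finset.mem_image, Finset.mem_filter] at hB
    obtain ⟨A, ⟨hA, hyA, hxA⟩, rfl⟩ := hB
    have hAk := hF hA
    rw [Finset.mem_powersetCard] at hAk ⊢
    constructor
    · intro z hz
      rw [Finset.mem_erase] at hz
      refine Finset.mem_erase.mpr ⟨hz.1, Finset.mem_erase.mpr ⟨?_, hAk.1 hz.2⟩⟩
      rintro rfl; exact hxA hz.2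
    · rw [Finset.card_erase_of_mem hyA, hAk.2]
  have hdisj : Disjoint (nbrBar F x y) (nbrBar F y x) := by
    rw [Finset.disjoint_left]
    intro B hB1 hB2
    simp only [nbrBar, Finset.mem_image, Finset.mem_filter] at hB1 hB2
    obtain ⟨A, ⟨hA, hxA, hyA⟩, hB⟩ := hB1
    obtain ⟨A', ⟨hA', hyA', hxA'⟩, hB'⟩ := hB2
    apply (hshift A' hA' hyA').2
    have hEq : insert x (A'.erase y) = A := by
      rw [hB', ← hB]
      exact Finset.insert_erase hxA
    rw [hEq]; exact hA
  calc (nbrBar F x y).card + (nbrBar F y x).card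
      = (nbrBar F x y ∪ nbrBar F y x).card :=
        (Finset.card_union_of_disjoint hdisj).symm
    _ ≤ (Finset.powersetCard (k - 1) S).card :=
        Finset.card_le_card (Finset.union_subset hsub1 hsub2)
    _ = Nat.choose (n - 2) (k - 1) := by
        rw [Finset.card_powersetCard, hScard]
end

section
/- For every integer k ≥ 3 and every real ε with 0 < ε < 1/k, there exists a positive integer s₀ = s₀(k,ε) such that the following holds. Let η be a real with 0 < η < ε^k/(3^{k+2}·k!) and let n, s be positive integers with s > s₀ and (1−η)ks ≤ n ≤ (1+η)ks + k − 2. If F ⊆ binom([n],k) is shifted on [n] and |F| > C(ks+k−2, k) − 3η(ks)^k, then ω(F) ≥ (1−ε)ks. -/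
section Aux

open Finset

/-- Single downward shift: in a shifted family, replacing `y ∈ B` by a smaller `x ∉ B`
stays in the family. -/
lemma aux_shift_mem {n : ℕ} {F : Finset (Finset ℕ)} (hS : ShiftedOn (Finset.Icc 1 n) F)
    {x y : ℕ} (hx : x ∈ Finset.Icc 1 n) (hy : y ∈ Finset.Icc 1 n) (hxy : x < y)
    {B : Finset ℕ} (hB : B ∈ F) (hyB : y ∈ B) (hxB : x ∉ B) :
    insert x (B.erase y) ∈ F := by
  by_cases h : insert x (B.erase y) ∈ F
  · exact h
  · have hEq := hS x hx y hy hxy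
    have hmem : shiftEdge x y F B ∈ shiftFam x y F := Finset.mem_image_of_mem _ hB
    rw [hEq] at hmem
    rwa [shiftEdge, if_pos ⟨hyB, hxB, h⟩] at hmem

/-- If the top `k`-set of `[m]` is in a shifted family, then all `k`-subsets of `[m]` are. -/
lemma aux_clique_of_top {n k m : ℕ} {F : Finset (Finset ℕ)} (hS : ShiftedOn (Finset.Icc 1 n) F)
    (hk : 2 ≤ k) (hkm : k ≤ m) (hmn : m ≤ n)
    (hT : Finset.Icc (m - k + 1) m ∈ F) :
    ∀ A ⊆ Finset.Icc 1 m, A.card = k → A ∈ F := by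
  have hcardT : (Finset.Icc (m - k + 1) m).card = k := by rw [Nat.card_Icc]; omega
  suffices H : ∀ N : ℕ, ∀ A : Finset ℕ, A ⊆ Finset.Icc 1 m → A.card = k →
      k * m - A.sum id ≤ N → A ∈ F by
    intro A hA hAc; exact H _ A hA hAc le_rfl
  intro N
  induction N using Nat.strong_induction_on with
  | _ N ih =>
    intro A hA hAc hm
    by_cases hAT : A = Finset.Icc (m - k + 1) m
    · rwa [hAT]
    have hTA : ¬ Finset.Icc (m - k + 1) m ⊆ A := by
      intro hsub
      exact hAT (Finset.eq_of_subset_of_card_le hsub (by omega)).symm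
    obtain ⟨y', hy'T, hy'A⟩ : ∃ y', y' ∈ Finset.Icc (m - k + 1) m ∧ y' ∉ A := by
      by_contra h; push_neg at h; exact hTA h
    have hy'b := Finset.mem_Icc.mp hy'T
    obtain ⟨y, hyA, hyy'⟩ : ∃ y ∈ A, y < y' := by
      by_contra h
      push_neg at h
      have hsub : A ⊆ Finset.Icc (y' + 1) m := by
        intro a ha
        have h1 := h a ha
        have h2 := (Finset.mem_Icc.mp (hA ha)).2
        have h3 : a ≠ y' := fun e => hy'A (e ▸ ha)
        exact Finset.mem_Icc.mpr ⟨by omega, h2⟩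
      have := Finset.card_le_card hsub
      rw [Nat.card_Icc] at this
      omega
    have hyb := Finset.mem_Icc.mp (hA hyA)
    -- the shifted-up set A'
    set A' : Finset ℕ := insert y' (A.erase y) with hA'def
    have hy'e : y' ∉ A.erase y := fun h => hy'A (Finset.mem_of_mem_erase h)
    have hA'c : A'.card = k := by
      rw [hA'def, Finset.card_insert_of_notMem hy'e, Finset.card_erase_of_mem hyA, hAc]
      omega
    have hA'sub : A' ⊆ Finset.Icc 1 m := by
      rw [hA'def]
      exact Finset.insert_subset (Finset.mem_Icc.mpr ⟨by omega, hy'b.2⟩)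
        ((Finset.erase_subset _ _).trans hA)
    have hsumE : (A.erase y).sum id + y = A.sum id := Finset.sum_erase_add _ _ hyA
    have hsumA' : A'.sum id = y' + (A.erase y).sum id := by
      rw [hA'def, Finset.sum_insert hy'e]; rfl
    have hsum_lt : A.sum id < k * m := by
      have h1 : ∀ a ∈ A, id a ≤ m := fun a ha => (Finset.mem_Icc.mp (hA ha)).2
      have h2 : ∃ a ∈ A, id a < m := by
        by_cases hm' : m ∈ A
        · obtain ⟨a, haA, ham⟩ : ∃ a ∈ A, a ≠ m := by
            by_contra h; push_neg at h
            have hs : A ⊆ {m} := fun a ha => Finset.mem_singleton.mpr (h a ha)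
            have := Finset.card_le_card hs
            rw [Finset.card_singleton] at this; omega
          exact ⟨a, haA, lt_of_le_of_ne (h1 a haA) ham⟩
        · obtain ⟨a, ha⟩ := Finset.card_pos.mp (show 0 < A.card by omega)
          exact ⟨a, ha, lt_of_le_of_ne (h1 a ha) (fun e => hm' (e ▸ ha))⟩
      calc A.sum id < A.sum (fun _ => m) := Finset.sum_lt_sum h1 h2
        _ = k * m := by rw [Finset.sum_const, hAc, smul_eq_mul, Nat.mul_comm]
    have hyA'sum : y ≤ A.sum id := Finset.single_le_sum (fun a _ => Nat.zero_le a) hyA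
    have hA'F : A' ∈ F := by
      refine ih (k * m - A'.sum id) ?_ A' hA'sub hA'c le_rfl
      omega
    -- shift A' back down to A
    have hyA' : y ∉ A' := by
      rw [hA'def]
      intro h
      rcases Finset.mem_insert.mp h with h | h
      · omega
      · exact (Finset.notMem_erase y A) h
    have hy'A' : y' ∈ A' := Finset.mem_insert_self _ _
    have := aux_shift_mem hS (Finset.mem_Icc.mpr ⟨hyb.1, hyb.2.trans hmn⟩)
      (Finset.mem_Icc.mpr ⟨by omega, hy'b.2.trans hmn⟩) hyy' hA'F hy'A' hyA'
    have hback : insert y (A'.erase y') = A := by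
      rw [hA'def, Finset.erase_insert hy'e, Finset.insert_erase hyA]
    rwa [hback] at this

/-- If a shifted family contains a `k`-set inside `[m-k+1, n]`, it contains the top set. -/
lemma aux_top_mem {n k m : ℕ} {F : Finset (Finset ℕ)} (hS : ShiftedOn (Finset.Icc 1 n) F)
    (hk : 1 ≤ k) (hkm : k ≤ m) (hmn : m ≤ n) :
    ∀ A ∈ F, A ⊆ Finset.Icc (m - k + 1) n → A.card = k →
      Finset.Icc (m - k + 1) m ∈ F := by
  have hcardT : (Finset.Icc (m - k + 1) m).card = k := by rw [Nat.card_Icc]; omega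
  suffices H : ∀ N : ℕ, ∀ A ∈ F, A ⊆ Finset.Icc (m - k + 1) n → A.card = k →
      A.sum id ≤ N → Finset.Icc (m - k + 1) m ∈ F from
    fun A hAF h1 h2 => H _ A hAF h1 h2 le_rfl
  intro N
  induction N using Nat.strong_induction_on with
  | _ N ih =>
    intro A hAF hA hAc hm
    by_cases hAT : A = Finset.Icc (m - k + 1) m
    · rwa [hAT] at hAF
    have hTA : ¬ Finset.Icc (m - k + 1) m ⊆ A := by
      intro hsub
      exact hAT (Finset.eq_of_subset_of_card_le hsub (by omega)).symm
    obtain ⟨x, hxT, hxA⟩ : ∃ x, x ∈ Finset.Icc (m - k + 1) m ∧ x ∉ A := by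
      by_contra h; push_neg at h; exact hTA h
    have hxb := Finset.mem_Icc.mp hxT
    obtain ⟨y, hyA, hxy⟩ : ∃ y ∈ A, x < y := by
      by_contra h
      push_neg at h
      have hsub : A ⊆ (Finset.Icc (m - k + 1) x).erase x := by
        intro a ha
        have h1 := h a ha
        have h2 := (Finset.mem_Icc.mp (hA ha)).1
        have h3 : a ≠ x := fun e => hxA (e ▸ ha)
        exact Finset.mem_erase.mpr ⟨h3, Finset.mem_Icc.mpr ⟨h2, h1⟩⟩
      have := Finset.card_le_card hsub
      rw [Finset.card_erase_of_mem (Finset.mem_Icc.mpr ⟨hxb.1, le_refl x⟩), Nat.card_Icc] at this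
      omega
    have hyb := Finset.mem_Icc.mp (hA hyA)
    have hA'F : insert x (A.erase y) ∈ F :=
      aux_shift_mem hS (Finset.mem_Icc.mpr ⟨by omega, hxb.2.trans hmn⟩)
        (Finset.mem_Icc.mpr ⟨by omega, hyb.2⟩) hxy hAF hyA hxA
    have hxe : x ∉ A.erase y := fun h => hxA (Finset.mem_of_mem_erase h)
    have hsumE : (A.erase y).sum id + y = A.sum id := Finset.sum_erase_add _ _ hyA
    have hsumA' : (insert x (A.erase y)).sum id = x + (A.erase y).sum id := by
      rw [Finset.sum_insert hxe]; rfl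
    have hA'sub : insert x (A.erase y) ⊆ Finset.Icc (m - k + 1) n :=
      Finset.insert_subset (Finset.mem_Icc.mpr ⟨hxb.1, hxb.2.trans hmn⟩)
        ((Finset.erase_subset _ _).trans hA)
    have hA'c : (insert x (A.erase y)).card = k := by
      rw [Finset.card_insert_of_notMem hxe, Finset.card_erase_of_mem hyA, hAc]
      omega
    exact ih ((insert x (A.erase y)).sum id) (by omega) _ hA'F hA'sub hA'c le_rfl

/-- Binomial growth bound. -/
lemma aux_choose_add_le (b k : ℕ) : ∀ d, (b + d).choose (k + 1) ≤
    b.choose (k + 1) + d * (b + d).choose k := by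
  intro d
  induction d with
  | zero => simp
  | succ d ihd =>
    have h1 : (b + (d + 1)).choose (k + 1) = (b + d).choose k + (b + d).choose (k + 1) := by
      have : b + (d + 1) = (b + d) + 1 := by omega
      rw [this, Nat.choose_succ_succ]
    have h2 : (b + d).choose k ≤ (b + (d + 1)).choose k :=
      Nat.choose_le_choose k (by omega)
    calc (b + (d + 1)).choose (k + 1) = (b + d).choose k + (b + d).choose (k + 1) := h1
      _ ≤ (b + d).choose k + (b.choose (k + 1) + d * (b + d).choose k) := by omega
      _ ≤ b.choose (k + 1) + (d + 1) * (b + (d + 1)).choose k := by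
          have h3 : (b + d).choose k ≤ (b + (d+1)).choose k := h2
          nlinarith [h3]

lemma aux_choose_sub_le (b n k : ℕ) (hk : 1 ≤ k) :
    n.choose k ≤ b.choose k + (n - b) * n.choose (k - 1) := by
  rcases le_total n b with h | h
  · have := Nat.choose_le_choose k h
    omega
  · obtain ⟨k', rfl⟩ : ∃ k', k = k' + 1 := ⟨k - 1, by omega⟩
    have h1 := aux_choose_add_le b k' (n - b)
    rw [Nat.add_sub_cancel' h] at h1
    simpa using h1

lemma aux_choose_le_pow (n k : ℕ) : n.choose k ≤ n ^ k := by
  have h1 : n.choose k ≤ k.factorial * n.choose k :=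
    Nat.le_mul_of_pos_left _ (Nat.factorial_pos k)
  calc n.choose k ≤ k.factorial * n.choose k := h1
    _ = n.descFactorial k := (Nat.descFactorial_eq_factorial_mul_choose n k).symm
    _ ≤ n ^ k := Nat.descFactorial_le_pow n k

lemma aux_pow_le_fact_choose (N k : ℕ) (hk : k ≤ N) :
    (N + 1 - k) ^ k ≤ k.factorial * N.choose k := by
  rw [← Nat.descFactorial_eq_factorial_mul_choose]
  exact Nat.pow_sub_le_descFactorial N k

end Aux

set_option maxHeartbeats 1000000 in
/-- a shifted dense family has a large clique. -/
theorem stmt6 (k : ℕ) (hk : 3 ≤ k) (ε : ℝ) (hε0 : 0 < ε) (hε1 : ε < 1 / k) :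
    ∃ s₀ : ℕ, 0 < s₀ ∧
      ∀ η : ℝ, 0 < η → η < ε ^ k / (3 ^ (k + 2) * Nat.factorial k) →
        ∀ (n s : ℕ), 0 < n → s₀ < s →
          (1 - η) * (k * s) ≤ (n : ℝ) → (n : ℝ) ≤ (1 + η) * (k * s) + k - 2 →
          ∀ F ⊆ Finset.powersetCard k (Finset.Icc 1 n),
            ShiftedOn (Finset.Icc 1 n) F →
            (Nat.choose (k * s + k - 2) k : ℝ) - 3 * η * (k * s) ^ k < F.card →
            (1 - ε) * (k * s) ≤ (cliqueNum n k F : ℝ) := by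
  refine ⟨⌈2 / ε⌉₊ + 2, by omega, ?_⟩
  intro η hη0 hη1 n s hn hs hns1 hns2 F hFsub hFsh hF
  push_cast at hns1 hns2 hF ⊢
  -- numeric setup
  have hk0 : (0:ℝ) < k := by exact_mod_cast (by omega : 0 < k)
  have hk3 : (3:ℝ) ≤ k := by exact_mod_cast hk
  have hε3 : ε ≤ 1 / 3 := by
    have h1 : (1:ℝ) / k ≤ 1 / 3 := by
      apply div_le_div_of_nonneg_left (by norm_num) (by norm_num) hk3
    linarith
  set K : ℝ := (k : ℝ) * (s : ℝ) with hKdef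
  clear_value K
  have hK0 : (0:ℝ) ≤ K := by rw [hKdef]; positivity
  have hs3 : (3:ℝ) ≤ (s : ℝ) := by exact_mod_cast (by omega : 3 ≤ s)
  have hs1 : 1 ≤ s := by omega
  have hs2 : 2 / ε ≤ (s : ℝ) := by
    have h1 : ((⌈2 / ε⌉₊ : ℕ) : ℝ) ≤ (s : ℝ) := by exact_mod_cast (by omega : ⌈2 / ε⌉₊ ≤ s)
    exact (Nat.le_ceil _).trans h1
  have hεs : 2 ≤ ε * s := by
    have := (div_le_iff₀ hε0).mp hs2
    nlinarith
  have hεK : 3 ≤ ε / 2 * K := by nlinarith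
  have hkK : (k : ℝ) ≤ K := by nlinarith
  -- η is tiny
  have hfac1 : (1:ℝ) ≤ (Nat.factorial k : ℝ) := by
    exact_mod_cast Nat.one_le_iff_ne_zero.mpr (Nat.factorial_ne_zero k)
  have hkfac : (k : ℝ) ≤ (Nat.factorial k : ℝ) := by exact_mod_cast Nat.self_le_factorial k
  have h3k2 : (2:ℝ) ≤ 3 ^ (k + 2) := by
    calc (2:ℝ) ≤ 3 ^ 1 := by norm_num
      _ ≤ 3 ^ (k + 2) := pow_le_pow_right₀ (by norm_num) (by omega)
  have hεk_le : ε ^ k ≤ ε := by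
    calc ε ^ k ≤ ε ^ 1 := pow_le_pow_of_le_one hε0.le (by linarith) (by omega)
      _ = ε := pow_one ε
  have hkη : (k : ℝ) * η ≤ ε / 2 := by
    have h1 : (k : ℝ) * η < k * (ε ^ k / (3 ^ (k + 2) * Nat.factorial k)) :=
      mul_lt_mul_of_pos_left hη1 hk0
    have h2 : (k : ℝ) * (ε ^ k / (3 ^ (k + 2) * Nat.factorial k)) ≤ ε / 2 := by
      rw [mul_div_assoc', div_le_div_iff₀ (by positivity) (by norm_num)]
      have h3 : (k : ℝ) * ε ^ k ≤ Nat.factorial k * ε :=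
        mul_le_mul hkfac hεk_le (pow_nonneg hε0.le k) (by linarith)
      have h4 : (0:ℝ) ≤ (Nat.factorial k : ℝ) * ε * (3 ^ (k + 2) - 2) :=
        mul_nonneg (mul_nonneg (by linarith) hε0.le) (by linarith)
      have h5 : ε * (3 ^ (k + 2) * (Nat.factorial k : ℝ)) =
          (Nat.factorial k : ℝ) * ε * (3 ^ (k + 2) - 2) + 2 * ((Nat.factorial k : ℝ) * ε) := by
        ring
      linarith
    linarith
  have hηε2 : η ≤ ε / 2 := by nlinarith
  have hη_le1 : η ≤ 1 := by linarith
  -- the clique size m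
  set m : ℕ := ⌈(1 - ε) * K⌉₊ with hmdef
  have hm_lb : (1 - ε) * K ≤ (m : ℝ) := Nat.le_ceil _
  have hm_ub : (m : ℝ) ≤ (1 - ε) * K + 1 := by
    have := Nat.ceil_lt_add_one (by nlinarith : (0:ℝ) ≤ (1 - ε) * K)
    linarith
  have hkm : k ≤ m := by
    have h1 : (k : ℝ) ≤ (m : ℝ) := by nlinarith
    exact_mod_cast h1
  have hmn : m ≤ n := by
    have h1 : (m : ℝ) ≤ (n : ℝ) := by nlinarith
    exact_mod_cast h1
  have hn3K : (n : ℝ) ≤ 3 * K := by nlinarith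
  -- Step 1 : F contains a set inside [m-k+1, n]
  have hEx : ∃ A ∈ F, A ⊆ Finset.Icc (m - k + 1) n := by
    by_contra hno
    push_neg at hno
    -- counting
    have hPsub : Finset.powersetCard k (Finset.Icc (m - k + 1) n) ⊆
        Finset.powersetCard k (Finset.Icc 1 n) :=
      Finset.powersetCard_mono (Finset.Icc_subset_Icc (by omega) le_rfl)
    have hdisj : Disjoint F (Finset.powersetCard k (Finset.Icc (m - k + 1) n)) :=
      Finset.disjoint_left.mpr fun A hAF hAP =>
        hno A hAF (Finset.mem_powersetCard.mp hAP).1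
    have hcard : F.card + (Finset.powersetCard k (Finset.Icc (m - k + 1) n)).card ≤
        (Finset.powersetCard k (Finset.Icc 1 n)).card := by
      rw [← Finset.card_union_of_disjoint hdisj]
      exact Finset.card_le_card (Finset.union_subset hFsub hPsub)
    rw [Finset.card_powersetCard, Finset.card_powersetCard, Nat.card_Icc, Nat.card_Icc,
      (by omega : n + 1 - 1 = n), (by omega : n + 1 - (m - k + 1) = n - m + k)] at hcard
    have hcardR : (F.card : ℝ) + ((n - m + k).choose k : ℝ) ≤ (n.choose k : ℝ) := by
      exact_mod_cast hcard
    -- now derive the contradiction via the master counting inequality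
    set b : ℕ := k * s + k - 2 with hbdef
    have hbR : (b : ℝ) = K + k - 2 := by
      rw [hbdef, hKdef]
      push_cast [show 2 ≤ k * s + k by nlinarith [hs1, hk]]
      ring
    have hchooseb : (n.choose k : ℝ) ≤ (b.choose k : ℝ) +
        ((n - b : ℕ) : ℝ) * (n.choose (k - 1) : ℝ) := by
      exact_mod_cast aux_choose_sub_le b n k (by omega)
    have hd : ((n - b : ℕ) : ℝ) ≤ η * K := by
      rcases le_total n b with h | h
      · rw [Nat.sub_eq_zero_of_le h]
        simp only [Nat.cast_zero]
        positivity
      · rw [Nat.cast_sub h, hbR]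
        linarith
    have hc1 : (n.choose (k - 1) : ℝ) ≤ (3 * K) ^ (k - 1) := by
      have h1 : (n.choose (k - 1) : ℝ) ≤ (n : ℝ) ^ (k - 1) := by
        exact_mod_cast aux_choose_le_pow n (k - 1)
      have h2 : (n : ℝ) ^ (k - 1) ≤ (3 * K) ^ (k - 1) :=
        pow_le_pow_left₀ (Nat.cast_nonneg n) hn3K (k - 1)
      linarith
    have hk1 : k - 1 + 1 = k := by omega
    have hKk : K ^ (k - 1) * K = K ^ k := by rw [← pow_succ, hk1]
    have hterm : ((n - b : ℕ) : ℝ) * (n.choose (k - 1) : ℝ) ≤ η * 3 ^ (k - 1) * K ^ k := by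
      have h1 : ((n - b : ℕ) : ℝ) * (n.choose (k - 1) : ℝ) ≤ (η * K) * (3 * K) ^ (k - 1) :=
        mul_le_mul hd hc1 (Nat.cast_nonneg _) (by positivity)
      have h2 : (η * K) * (3 * K) ^ (k - 1) = η * 3 ^ (k - 1) * (K ^ (k - 1) * K) := by
        rw [mul_pow]; ring
      rw [h2, hKk] at h1
      exact h1
    have h31 : (1:ℝ) ≤ 3 ^ (k - 1) := one_le_pow₀ (by norm_num)
    have hsum3 : η * 3 ^ (k - 1) * K ^ k + 3 * η * K ^ k ≤ η * 3 ^ (k + 1) * K ^ k := by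
      have h9 : (3:ℝ) ^ (k + 1) = 3 ^ (k - 1) * 9 := by
        rw [show k + 1 = (k - 1) + 2 by omega, pow_add]; norm_num
      have hfac : η * 3 ^ (k - 1) * K ^ k + 3 * η * K ^ k =
          (3 ^ (k - 1) + 3) * (η * K ^ k) := by ring
      have h2 : (3:ℝ) ^ (k - 1) + 3 ≤ 3 ^ (k - 1) * 9 := by nlinarith
      have h3 : (0:ℝ) ≤ η * K ^ k := by positivity
      calc η * 3 ^ (k - 1) * K ^ k + 3 * η * K ^ k = (3 ^ (k - 1) + 3) * (η * K ^ k) := hfac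
        _ ≤ (3 ^ (k - 1) * 9) * (η * K ^ k) := mul_le_mul_of_nonneg_right h2 h3
        _ = η * 3 ^ (k + 1) * K ^ k := by rw [h9]; ring
    have ha : η * 3 ^ (k + 1) * K ^ k ≤ ε ^ k * K ^ k / (3 * Nat.factorial k) := by
      have hη3 : η * 3 ^ (k + 1) ≤ ε ^ k / (3 * Nat.factorial k) := by
        have h1 : η * 3 ^ (k + 1) < (ε ^ k / (3 ^ (k + 2) * Nat.factorial k)) * 3 ^ (k + 1) :=
          mul_lt_mul_of_pos_right hη1 (by positivity)
        have h2 : (ε ^ k / (3 ^ (k + 2) * Nat.factorial k)) * 3 ^ (k + 1) =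
            ε ^ k / (3 * Nat.factorial k) := by
          rw [show (3:ℝ) ^ (k + 2) = 3 ^ (k + 1) * 3 from pow_succ 3 (k + 1)]
          field_simp
        linarith
      calc η * 3 ^ (k + 1) * K ^ k ≤ (ε ^ k / (3 * Nat.factorial k)) * K ^ k :=
            mul_le_mul_of_nonneg_right hη3 (by positivity)
        _ = ε ^ k * K ^ k / (3 * Nat.factorial k) := by ring
    -- lower bound for the missing part
    have hcC : ε ^ k * K ^ k / (3 * (Nat.factorial k : ℝ)) ≤ ((n - m + k).choose k : ℝ) := by
      have hhe : η / ε ≤ 1 / 2 := by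
        rw [div_le_iff₀ hε0]; linarith
      have hhe0 : 0 ≤ η / ε := by positivity
      have hB := one_add_mul_le_pow (show (-2:ℝ) ≤ -(η / ε) by linarith) k
      have hkηε : (k : ℝ) * (η / ε) ≤ 1 / 2 := by
        rw [mul_div_assoc', div_le_iff₀ hε0]
        linarith
      have h12 : (1:ℝ) / 2 ≤ (1 - η / ε) ^ k := by
        have he1 : (1:ℝ) + (k : ℝ) * -(η / ε) = 1 - (k : ℝ) * (η / ε) := by ring
        have he2 : (1:ℝ) + -(η / ε) = 1 - η / ε := by ring
        rw [he1, he2] at hB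
        linarith
      have hsplit : (ε - η) ^ k = ε ^ k * (1 - η / ε) ^ k := by
        rw [← mul_pow]
        congr 1
        field_simp
      have hεη : ε ^ k ≤ 3 * (ε - η) ^ k := by
        rw [hsplit]
        have := mul_le_mul_of_nonneg_left h12 (pow_nonneg hε0.le k)
        linarith [pow_nonneg hε0.le k]
      have hbase : (ε - η) * K ≤ (n : ℝ) - m + 1 := by linarith
      have hbase0 : 0 ≤ (ε - η) * K := mul_nonneg (by linarith) hK0
      have hpow1 : ((ε - η) * K) ^ k ≤ ((n : ℝ) - m + 1) ^ k :=
        pow_le_pow_left₀ hbase0 hbase k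
      have hnat : (n - m + 1) ^ k ≤ Nat.factorial k * (n - m + k).choose k := by
        have h := aux_pow_le_fact_choose (n - m + k) k (by omega)
        rwa [show n - m + k + 1 - k = n - m + 1 by omega] at h
      have hcast : ((n : ℝ) - m + 1) ^ k ≤ (Nat.factorial k : ℝ) * ((n - m + k).choose k : ℝ) := by
        have h' : (((n - m + 1 : ℕ)) : ℝ) ^ k ≤
            (Nat.factorial k : ℝ) * ((n - m + k).choose k : ℝ) := by exact_mod_cast hnat
        rwa [show (((n - m + 1 : ℕ)) : ℝ) = (n : ℝ) - m + 1 by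
          push_cast [Nat.cast_sub hmn]; ring] at h'
      rw [div_le_iff₀ (by positivity)]
      have h1 : ε ^ k * K ^ k ≤ 3 * ((ε - η) * K) ^ k := by
        rw [mul_pow]
        have := mul_le_mul_of_nonneg_right hεη (pow_nonneg hK0 k)
        linarith
      linarith
    -- contradiction
    linarith
  obtain ⟨A, hAF, hAsub⟩ := hEx
  have hAcard : A.card = k := (Finset.mem_powersetCard.mp (hFsub hAF)).2
  have hT : Finset.Icc (m - k + 1) m ∈ F :=
    aux_top_mem hFsh (by omega) hkm hmn A hAF hAsub hAcard
  -- the clique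
  have hmem : m ∈ {m' | ∃ U ⊆ Finset.Icc 1 n, U.card = m' ∧ Finset.powersetCard k U ⊆ F} := by
    refine ⟨Finset.Icc 1 m, Finset.Icc_subset_Icc le_rfl hmn, by rw [Nat.card_Icc]; omega, ?_⟩
    intro A' hA'
    obtain ⟨h1, h2⟩ := Finset.mem_powersetCard.mp hA'
    exact aux_clique_of_top hFsh (by omega) hkm hmn hT A' h1 h2
  have hbdd : BddAbove {m' | ∃ U ⊆ Finset.Icc 1 n, U.card = m' ∧
      Finset.powersetCard k U ⊆ F} := by
    refine ⟨n, fun x hx => ?_⟩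
    obtain ⟨U, hU, hcard, _⟩ := hx
    rw [← hcard]
    calc U.card ≤ (Finset.Icc 1 n).card := Finset.card_le_card hU
      _ = n := by rw [Nat.card_Icc]; omega
  have hclique : m ≤ cliqueNum n k F := le_csSup hbdd hmem
  have hcl : (m : ℝ) ≤ (cliqueNum n k F : ℝ) := by exact_mod_cast hclique
  linarith
end

section
/- For all integers k ≥ 3 and ℓ ≥ 1 with k > ℓ + 3, there exists a positive integer s₀ such that for every integer s > s₀, setting n = k(s+1) + ℓ, one has |E₀(n,k,s)| > |E₁(n,k,s)|; equivalently, C(ks+k−2, k−1) − C(ks−1, k−1) + ℓ + 1 > (ℓ+2)·C(ks+k−3, k−2). -/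
open Finset


lemma hockey (M r : ℕ) (d : ℕ) :
    (M + d).choose (r + 1) = M.choose (r + 1) + ∑ i ∈ range d, (M + i).choose r := by
  induction d with
  | zero => simp
  | succ d ih =>
    have h : M + (d + 1) = (M + d) + 1 := by omega
    rw [h, sum_range_succ, Nat.choose_succ_succ', ih]
    omega

lemma key (M u l : ℕ) (hM : (u+4)*(u+3)^2 ≤ M + 1) (hl : l ≤ u + 1) :
    (l+2) * (M+u+3).choose (u+3) + M.choose (u+4) + 1 ≤ (M+u+4).choose (u+4) + l + 1 := by
  set C := (M+u+3).choose (u+3) with hC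
  set E := (M+u+2).choose (u+2) with hE
  set S := ∑ i ∈ range (u+4), (M+i).choose (u+3) with hS
  have h1 : (M+u+4).choose (u+4) = M.choose (u+4) + S := by
    have := hockey M (u+3) (u+4)
    rw [show M + (u+4) = M+u+4 by omega] at this
    exact this
  have h2 : ∀ i ∈ range (u+4), C ≤ (M+i).choose (u+3) + (u+3) * E := by
    intro i hi
    rw [mem_range] at hi
    have hh := hockey (M+i) (u+2) (u+3-i)
    rw [show M + i + (u+3-i) = M+u+3 by omega, show u+2+1 = u+3 by omega] at hh
    have hb : ∑ j ∈ range (u+3-i), (M+i+j).choose (u+2) ≤ (u+3) * E := by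
      calc ∑ j ∈ range (u+3-i), (M+i+j).choose (u+2)
          ≤ ∑ j ∈ range (u+3-i), E := by
            apply sum_le_sum
            intro j hj
            rw [mem_range] at hj
            exact Nat.choose_le_choose _ (by omega)
        _ = (u+3-i) * E := by rw [sum_const, smul_eq_mul]; simp
        _ ≤ (u+3) * E := Nat.mul_le_mul_right _ (by omega)
    omega
  have h2' : (u+4) * C ≤ S + (u+4)*((u+3)*E) := by
    calc (u+4)*C = ∑ _i ∈ range (u+4), C := by rw [sum_const, smul_eq_mul]; simp
      _ ≤ ∑ i ∈ range (u+4), ((M+i).choose (u+3) + (u+3)*E) := sum_le_sum h2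
      _ = S + (u+4)*((u+3)*E) := by rw [sum_add_distrib, sum_const, smul_eq_mul]; simp [hS]
  have h3 : C * (u+3) = (M+u+3).choose (u+2) * (M+1) := by
    have := Nat.choose_succ_right_eq (M+u+3) (u+2)
    rw [show M+u+3 - (u+2) = M+1 by omega] at this
    exact this
  have h4 : E ≤ (M+u+3).choose (u+2) := Nat.choose_le_choose _ (by omega)
  have h5 : (u+4)*((u+3)*E) ≤ C := by
    have hstep : ((u+4)*((u+3)*E)) * (u+3) ≤ C * (u+3) := by
      rw [h3]
      calc (u+4)*((u+3)*E)*(u+3) = ((u+4)*(u+3)^2) * E := by ring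
        _ ≤ (M+1) * E := Nat.mul_le_mul_right _ hM
        _ ≤ (M+1) * (M+u+3).choose (u+2) := Nat.mul_le_mul_left _ h4
        _ = (M+u+3).choose (u+2) * (M+1) := mul_comm _ _
    exact Nat.le_of_mul_le_mul_right hstep (by omega)
  have h6 : (u+3) * C ≤ S := by nlinarith [h2', h5]
  have h7 : (l+2) * C ≤ (u+3) * C := Nat.mul_le_mul_right _ (by omega)
  have h8 : (l+2) * C ≤ S := le_trans h7 h6
  generalize (l+2) * C = a at h8 ⊢
  omega


lemma card_filter_one_mem (m r : ℕ) (hm : 1 ≤ m) :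
    ((Finset.powersetCard (r+1) (Finset.Icc 1 m)).filter fun B => 1 ∈ B).card
      = (m - 1).choose r := by
  have h : ((Finset.Icc 2 m).powersetCard r).card = (m-1).choose r := by
    rw [Finset.card_powersetCard, Nat.card_Icc, show m+1-2 = m-1 by omega]
  rw [← h]
  refine Finset.card_bij' (fun B _ => B.erase 1) (fun C _ => insert 1 C) ?hi ?hj ?li ?ri
  case hi =>
    intro B hB
    simp only [mem_filter, mem_powersetCard] at hB
    obtain ⟨⟨hsub, hcard⟩, h1⟩ := hB
    rw [mem_powersetCard]
    constructor
    · intro x hx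
      rw [mem_erase] at hx
      have := hsub hx.2
      rw [mem_Icc] at this ⊢
      omega
    · rw [card_erase_of_mem h1, hcard]; omega
  case hj =>
    intro C hC
    rw [mem_powersetCard] at hC
    simp only [mem_filter, mem_powersetCard]
    have h1C : 1 ∉ C := fun h => by have := hC.1 h; rw [mem_Icc] at this; omega
    refine ⟨⟨?_, ?_⟩, mem_insert_self _ _⟩
    · intro x hx; rw [mem_insert] at hx
      rcases hx with rfl | hx
      · rw [mem_Icc]; omega
      · have := hC.1 hx; rw [mem_Icc] at this ⊢; omega
    · rw [card_insert_of_notMem h1C, hC.2]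
  case li =>
    intro B hB
    simp only [mem_filter] at hB
    exact insert_erase hB.2
  case ri =>
    intro C hC
    rw [mem_powersetCard] at hC
    have h1C : 1 ∉ C := fun h => by have := hC.1 h; rw [mem_Icc] at this; omega
    exact erase_insert h1C

lemma filter_no_inter (m k : ℕ) (hk : 1 ≤ k) :
    ((Finset.powersetCard (k-1) (Finset.Icc 1 m)).filter
        fun B => ¬ (B ∩ Finset.Icc 1 (k-1)).Nonempty)
      = Finset.powersetCard (k-1) (Finset.Icc k m) := by
  ext B
  simp only [mem_filter, mem_powersetCard, not_nonempty_iff_eq_empty,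
    eq_empty_iff_forall_notMem, mem_inter, mem_Icc, not_and]
  constructor
  · rintro ⟨⟨hsub, hcard⟩, hdis⟩
    refine ⟨fun x hx => ?_, hcard⟩
    have h1 := hsub hx
    rw [mem_Icc] at h1 ⊢
    have h2 := hdis x hx
    omega
  · rintro ⟨hsub, hcard⟩
    refine ⟨⟨fun x hx => ?_, hcard⟩, fun x hx => ?_⟩
    · have := hsub hx; rw [mem_Icc] at this ⊢; omega
    · have := hsub hx; rw [mem_Icc] at this; omega

lemma card_filter_inter (m k : ℕ) (hk : 1 ≤ k) :
    ((Finset.powersetCard (k-1) (Finset.Icc 1 m)).filter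
        fun B => (B ∩ Finset.Icc 1 (k-1)).Nonempty).card
      + (m - (k-1)).choose (k-1) = m.choose (k-1) := by
  classical
  have h := Finset.card_filter_add_card_filter_not
    (s := Finset.powersetCard (k-1) (Finset.Icc 1 m))
    (fun B => (B ∩ Finset.Icc 1 (k-1)).Nonempty)
  rw [filter_no_inter m k hk] at h
  rw [Finset.card_powersetCard, Nat.card_Icc] at h
  rw [Finset.card_powersetCard, Nat.card_Icc] at h
  convert h using 3 <;> omega

lemma cardE1 (k s l : ℕ) (hk : 5 ≤ k) (hs : 1 ≤ s) :
    (E1 (k*(s+1)+l) k s).card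
      = (k*s+k-2).choose k + (l+2) * ((k*s+k-2-1).choose (k-2)) := by
  classical
  have hks : k ≤ k*s := Nat.le_mul_of_pos_right k hs
  have hmul : k*(s+1) = k*s+k := by ring
  set n := k*(s+1)+l with hn
  set Q := ((Finset.powersetCard k (Finset.Icc 1 n)).filter
        (fun A => 1 ∈ A ∧ ∃ x ∈ Finset.Icc (k*s+k-1) n, A \ Finset.Icc 1 (k*s+k-2) = {x})) with hQ
  have hE : E1 n k s = Finset.powersetCard k (Finset.Icc 1 (k*s+k-2)) ∪ Q := by
    rw [E1, hQ]
    ext A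
    simp only [mem_union, mem_filter]
  rw [hE]
  have hm1 : (1:ℕ) ≤ k*s+k-2 := by omega
  have hdisj : Disjoint (Finset.powersetCard k (Finset.Icc 1 (k*s+k-2))) Q := by
    rw [hQ, Finset.disjoint_left]
    intro A hA hA'
    simp only [mem_powersetCard] at hA
    simp only [mem_filter] at hA'
    obtain ⟨x, hx, hdiff⟩ := hA'.2.2
    have hxm : x ∈ A \ Finset.Icc 1 (k*s+k-2) := by rw [hdiff]; exact mem_singleton_self x
    rw [mem_sdiff] at hxm
    exact hxm.2 (hA.1 hxm.1)
  rw [Finset.card_union_of_disjoint hdisj]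
  congr 1
  · rw [Finset.card_powersetCard, Nat.card_Icc, show (k*s+k-2)+1-1 = k*s+k-2 from by omega]
  · have himg : Q = ((Finset.Icc (k*s+k-1) n) ×ˢ
          ((Finset.powersetCard (k-2+1) (Finset.Icc 1 (k*s+k-2))).filter fun B => 1 ∈ B)).image
          (fun p => insert p.1 p.2) := by
      rw [hQ]
      ext A
      simp only [mem_filter, mem_image, mem_product, mem_powersetCard, mem_Icc, Prod.exists]
      constructor
      · rintro ⟨⟨hsub, hcard⟩, h1A, x, hx, hdiff⟩
        have hxA : x ∈ A ∧ x ∉ Finset.Icc 1 (k*s+k-2) := by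
          have h := mem_singleton_self x
          rw [← hdiff, mem_sdiff] at h
          exact h
        refine ⟨x, A ∩ Finset.Icc 1 (k*s+k-2), ⟨hx, ⟨⟨inter_subset_right, ?_⟩, ?_⟩⟩, ?_⟩
        · have h2 := Finset.card_sdiff_add_card_inter A (Finset.Icc 1 (k*s+k-2))
          rw [hdiff, card_singleton, hcard] at h2
          omega
        · rw [mem_inter, mem_Icc]
          exact ⟨h1A, by omega⟩
        · ext a
          rw [mem_insert, mem_inter]
          constructor
          · rintro (rfl | ⟨ha, _⟩)
            · exact hxA.1
            · exact ha
          · intro ha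
            by_cases hmem : a ∈ Finset.Icc 1 (k*s+k-2)
            · exact Or.inr ⟨ha, hmem⟩
            · left
              have h3 : a ∈ A \ Finset.Icc 1 (k*s+k-2) := mem_sdiff.2 ⟨ha, hmem⟩
              rw [hdiff, mem_singleton] at h3
              exact h3
      · rintro ⟨x, B, ⟨hx, ⟨hBsub, hBcard⟩, h1B⟩, rfl⟩
        have hxB : x ∉ B := by
          intro hxB
          have h := hBsub hxB
          rw [mem_Icc] at h
          omega
        refine ⟨⟨?_, ?_⟩, ?_, ⟨x, hx, ?_⟩⟩
        · intro a ha
          rw [mem_insert] at ha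
          rcases ha with rfl | ha
          · rw [mem_Icc]; omega
          · have h := hBsub ha; rw [mem_Icc] at h ⊢; omega
        · rw [card_insert_of_notMem hxB, hBcard]; omega
        · exact mem_insert_of_mem h1B
        · ext a
          rw [mem_sdiff, mem_insert, mem_singleton, mem_Icc]
          constructor
          · rintro ⟨rfl | ha, hni⟩
            · rfl
            · exfalso
              have h := hBsub ha
              rw [mem_Icc] at h
              exact hni h
          · rintro rfl
            exact ⟨Or.inl rfl, by omega⟩
    have hinj : Set.InjOn (fun p : ℕ × Finset ℕ => insert p.1 p.2)
        ↑((Finset.Icc (k*s+k-1) n) ×ˢ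
          ((Finset.powersetCard (k-2+1) (Finset.Icc 1 (k*s+k-2))).filter fun B => 1 ∈ B)) := by
      rintro ⟨x, B⟩ hxB ⟨y, C⟩ hyC heq
      simp only [coe_product, Set.mem_prod, mem_coe, mem_filter, mem_powersetCard, mem_Icc]
        at hxB hyC
      simp only at heq
      have hxC : x ∉ C := by
        intro h
        have := hyC.2.1.1 h
        rw [mem_Icc] at this
        omega
      have hxB' : x ∉ B := by
        intro h
        have := hxB.2.1.1 h
        rw [mem_Icc] at this
        omega
      obtain rfl : x = y := by
        have hx' : x ∈ insert y C := heq ▸ mem_insert_self x B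
        rw [mem_insert] at hx'
        rcases hx' with rfl | h
        · rfl
        · exact absurd h hxC
      have hBC : B = C := by
        have := congrArg (fun S => S.erase x) heq
        simpa [erase_insert hxB', erase_insert hxC] using this
      rw [hBC]
    rw [himg, Finset.card_image_of_injOn hinj, Finset.card_product, Nat.card_Icc,
        card_filter_one_mem (k*s+k-2) (k-2) hm1,
        show n+1-(k*s+k-1) = l+2 from by omega]

lemma cardE0 (k s l : ℕ) (hk : 5 ≤ k) (hs : 1 ≤ s) :
    (E0 (k*(s+1)+l) k s).card + (k*s-1).choose (k-1)
      = (k*s+k-2).choose k + (k*s+k-2).choose (k-1) + (l+1) := by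
  classical
  have hks : k ≤ k*s := Nat.le_mul_of_pos_right k hs
  have hmul : k*(s+1) = k*s+k := by ring
  set n := k*(s+1)+l with hn
  set Q := ((Finset.powersetCard k (Finset.Icc 1 n)).filter
      (fun A => A \ Finset.Icc 1 (k*s+k-2) = {k*s+k-1} ∧
        (A ∩ Finset.Icc 1 (k-1)).Nonempty)) with hQ
  set R := ((Finset.Icc (k*s+k) n).image (fun x => insert x (Finset.Icc 1 (k-1)))) with hR
  have hE : E0 n k s = (Finset.powersetCard k (Finset.Icc 1 (k*s+k-2)) ∪ Q) ∪ R := by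
    rw [E0, hQ, hR]
  rw [hE]
  -- disjointness
  have hd1 : Disjoint (Finset.powersetCard k (Finset.Icc 1 (k*s+k-2))) Q := by
    rw [hQ, Finset.disjoint_left]
    intro A hA hA'
    simp only [mem_powersetCard] at hA
    simp only [mem_filter] at hA'
    have hxm : (k*s+k-1) ∈ A \ Finset.Icc 1 (k*s+k-2) := by
      rw [hA'.2.1]; exact mem_singleton_self _
    rw [mem_sdiff] at hxm
    exact hxm.2 (hA.1 hxm.1)
  have hd2 : Disjoint (Finset.powersetCard k (Finset.Icc 1 (k*s+k-2)) ∪ Q) R := by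
    rw [Finset.disjoint_left]
    intro A hA hAR
    rw [hR] at hAR
    simp only [mem_image, mem_Icc] at hAR
    obtain ⟨x, hx, rfl⟩ := hAR
    rw [mem_union] at hA
    rcases hA with hA | hA
    · simp only [mem_powersetCard] at hA
      have := hA.1 (mem_insert_self x _)
      rw [mem_Icc] at this
      omega
    · rw [hQ] at hA
      simp only [mem_filter] at hA
      have hxd : x ∈ insert x (Finset.Icc 1 (k-1)) \ Finset.Icc 1 (k*s+k-2) := by
        rw [mem_sdiff, mem_Icc]
        exact ⟨mem_insert_self x _, by omega⟩
      rw [hA.2.1, mem_singleton] at hxd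
      omega
  rw [Finset.card_union_of_disjoint hd2, Finset.card_union_of_disjoint hd1]
  -- card P
  have hcardP : (Finset.powersetCard k (Finset.Icc 1 (k*s+k-2))).card = (k*s+k-2).choose k := by
    rw [Finset.card_powersetCard, Nat.card_Icc, show (k*s+k-2)+1-1 = k*s+k-2 from by omega]
  -- card R
  have hcardR : R.card = l + 1 := by
    rw [hR]
    rw [Finset.card_image_of_injOn, Nat.card_Icc, show n+1-(k*s+k) = l+1 from by omega]
    rintro x hx y hy heq
    simp only [mem_coe, mem_Icc] at hx hy
    change insert x (Finset.Icc 1 (k-1)) = insert y (Finset.Icc 1 (k-1)) at heq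
    have hxn : x ∉ Finset.Icc 1 (k-1) := by rw [mem_Icc]; omega
    have hx' : x ∈ insert y (Finset.Icc 1 (k-1)) := heq ▸ mem_insert_self x _
    rw [mem_insert] at hx'
    rcases hx' with rfl | h
    · rfl
    · exact absurd h hxn
  -- card Q
  have himg : Q = ((Finset.powersetCard (k-1) (Finset.Icc 1 (k*s+k-2))).filter
      (fun B => (B ∩ Finset.Icc 1 (k-1)).Nonempty)).image (insert (k*s+k-1)) := by
    rw [hQ]
    ext A
    simp only [mem_filter, mem_image, mem_powersetCard]
    constructor
    · rintro ⟨⟨hsub, hcard⟩, hdiff, hne⟩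
      have hmA : (k*s+k-1) ∈ A := by
        have h := mem_singleton_self (k*s+k-1)
        rw [← hdiff, mem_sdiff] at h
        exact h.1
      refine ⟨A ∩ Finset.Icc 1 (k*s+k-2), ⟨⟨inter_subset_right, ?_⟩, ?_⟩, ?_⟩
      · have h2 := Finset.card_sdiff_add_card_inter A (Finset.Icc 1 (k*s+k-2))
        rw [hdiff, card_singleton, hcard] at h2
        omega
      · obtain ⟨a, ha⟩ := hne
        rw [mem_inter, mem_Icc] at ha
        refine ⟨a, ?_⟩
        rw [mem_inter, mem_inter, mem_Icc, mem_Icc]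
        exact ⟨⟨ha.1, ha.2.1, by omega⟩, ha.2⟩
      · ext a
        rw [mem_insert, mem_inter]
        constructor
        · rintro (rfl | ⟨ha, _⟩)
          · exact hmA
          · exact ha
        · intro ha
          by_cases hmem : a ∈ Finset.Icc 1 (k*s+k-2)
          · exact Or.inr ⟨ha, hmem⟩
          · left
            have h3 : a ∈ A \ Finset.Icc 1 (k*s+k-2) := mem_sdiff.2 ⟨ha, hmem⟩
            rw [hdiff, mem_singleton] at h3
            exact h3
    · rintro ⟨B, ⟨⟨hBsub, hBcard⟩, hBne⟩, rfl⟩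
      have hxB : (k*s+k-1) ∉ B := by
        intro hxB
        have h := hBsub hxB
        rw [mem_Icc] at h
        omega
      refine ⟨⟨?_, ?_⟩, ?_, ?_⟩
      · intro a ha
        rw [mem_insert] at ha
        rcases ha with rfl | ha
        · rw [mem_Icc]; omega
        · have h := hBsub ha; rw [mem_Icc] at h ⊢; omega
      · rw [card_insert_of_notMem hxB, hBcard]; omega
      · ext a
        rw [mem_sdiff, mem_insert, mem_singleton, mem_Icc]
        constructor
        · rintro ⟨rfl | ha, hni⟩
          · rfl
          · exfalso
            have h := hBsub ha
            rw [mem_Icc] at h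
            exact hni h
        · rintro rfl
          exact ⟨Or.inl rfl, by omega⟩
      · obtain ⟨a, ha⟩ := hBne
        rw [mem_inter] at ha
        exact ⟨a, mem_inter.2 ⟨mem_insert_of_mem ha.1, ha.2⟩⟩
  have hcardQ : Q.card + (k*s-1).choose (k-1) = (k*s+k-2).choose (k-1) := by
    rw [himg, Finset.card_image_of_injOn]
    · rw [show (k*s-1) = (k*s+k-2) - (k-1) from by omega]
      exact card_filter_inter (k*s+k-2) k (by omega)
    · rintro B hB C hC heq
      simp only [mem_coe, mem_filter, mem_powersetCard] at hB hC
      have hxB : (k*s+k-1) ∉ B := by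
        intro h
        have := hB.1.1 h
        rw [mem_Icc] at this
        omega
      have hxC : (k*s+k-1) ∉ C := by
        intro h
        have := hC.1.1 h
        rw [mem_Icc] at this
        omega
      have := congrArg (fun S => S.erase (k*s+k-1)) heq
      simpa [erase_insert hxB, erase_insert hxC] using this
  rw [hcardP, hcardR]
  omega

/-- for `k > ℓ + 3` and large `s`, `|E₀| > |E₁|`. -/
theorem stmt10 (k l : ℕ) (hk : 3 ≤ k) (hl : 1 ≤ l) (hkl : l + 3 < k) :
    ∃ s₀ : ℕ, 0 < s₀ ∧ ∀ s : ℕ, s₀ < s →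
      (E1 (k * (s + 1) + l) k s).card < (E0 (k * (s + 1) + l) k s).card ∧
      ((l : ℤ) + 2) * Nat.choose (k * s + k - 3) (k - 2) <
        (Nat.choose (k * s + k - 2) (k - 1) : ℤ) - Nat.choose (k * s - 1) (k - 1)
          + l + 1 := by
  obtain ⟨u, rfl⟩ : ∃ u, k = u + 5 := ⟨k - 5, by omega⟩
  refine ⟨(u+4)*(u+3)^2 + 1, by omega, fun s hs => ?_⟩
  have hs1 : 1 ≤ s := by omega
  have hks : (u+5) ≤ (u+5)*s := Nat.le_mul_of_pos_right _ hs1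
  have hsks : s ≤ (u+5)*s := Nat.le_mul_of_pos_left s (by omega)
  set M := (u+5)*s - 1 with hMdef
  have hkey := key M u l (by omega) (by omega)
  have h0 := cardE0 (u+5) s l (by omega) hs1
  have h1 := cardE1 (u+5) s l (by omega) hs1
  rw [show (u+5)*s+(u+5)-2-1 = M+u+3 from by omega,
      show (u+5)*s+(u+5)-2 = M+u+4 from by omega,
      show (u+5)-2 = u+3 from by omega] at h1
  rw [show (u+5)*s+(u+5)-2 = M+u+4 from by omega,
      show (u+5)*s-1 = M from by omega,
      show (u+5)-1 = u+4 from by omega] at h0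
  constructor
  · generalize hP : (l+2) * Nat.choose (M+u+3) (u+3) = P at h1 hkey
    omega
  · rw [show (u+5)*s+(u+5)-3 = M+u+3 from by omega,
        show (u+5)*s+(u+5)-2 = M+u+4 from by omega,
        show (u+5)-2 = u+3 from by omega,
        show (u+5)-1 = u+4 from by omega]
    have hc : ((l:ℤ)+2) * ((Nat.choose (M+u+3) (u+3) : ℕ) : ℤ)
        = (((l+2) * Nat.choose (M+u+3) (u+3) : ℕ) : ℤ) := by push_cast; ring
    rw [hc]
    generalize hP : (l+2) * Nat.choose (M+u+3) (u+3) = P at hkey ⊢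
    omega
end

section
/- For all integers k ≥ 3, ℓ ≥ 1 with k ≤ ℓ + 3 and every integer s ≥ 1, setting n = k(s+1) + ℓ, one has |E₁(n,k,s)| ≥ |E₀(n,k,s)|; equivalently, (ℓ+2)·C(ks+k−3, k−2) ≥ C(ks+k−2, k−1) − C(ks−1, k−1) + ℓ + 1. -/
/-!
Both families contain every `k`-subset of `[m]`, `m = ks+k-2`. The remaining edges of `E₀` are
the `k`-sets `B ∪ {m+1}` with `B ∈ binom([m], k-1)` meeting `[k-1]`, at most
`C(m,k-1) - C(m-k+1,k-1)` of them, and the at most `ℓ+1` sets `[k-1] ∪ {x}`; while `E₁` contains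
the `(ℓ+2)·C(m-1,k-2)` sets `{1,x} ∪ T` with `m < x ≤ n` and `T ∈ binom([2,m], k-2)`.
The numerical inequality comes from the hockey stick identity
`C(b+c+1,c+1) - C(b,c+1) = ∑_{j ≤ c} C(b+j,c)`: each of the first `c` summands is smaller than the
last one, `C(b+c,c)`, and `c = k-2 ≤ ℓ+1`.
-/

open Finset

namespace Nat

theorem choose_add_eq_choose_add_sum (b c m : ℕ) :
    (b + m).choose (c + 1) = b.choose (c + 1) + ∑ j ∈ range m, (b + j).choose c := by
  induction m with
  | zero => simp
  | succ m ih => rw [← add_assoc, choose_succ_succ', ih, sum_range_succ]; ring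

theorem choose_add_lt_choose_add {b c j : ℕ} (hj : j < c) :
    (b + j).choose c < (b + c).choose c := by
  obtain ⟨c, rfl⟩ : ∃ c', c = c' + 1 := ⟨c - 1, by omega⟩
  calc (b + j).choose (c + 1) ≤ (b + c).choose (c + 1) := choose_le_choose _ (by omega)
    _ < (b + c).choose c + (b + c).choose (c + 1) := Nat.lt_add_of_pos_left (choose_pos (by omega))
    _ = (b + (c + 1)).choose (c + 1) := (choose_succ_succ' _ _).symm

theorem choose_succ_add_le (b c l : ℕ) (hcl : c ≤ l + 1) :
    (b + c + 1).choose (c + 1) + l + 1 ≤ (l + 2) * (b + c).choose c + b.choose (c + 1) := by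
  set X := (b + c).choose c
  have hsum : ∑ j ∈ range (c + 1), (b + j).choose c + c ≤ (c + 1) * X := by
    have : ∑ j ∈ range c, ((b + j).choose c + 1) ≤ c * X := by
      simpa using sum_le_card_nsmul (range c) _ X
        fun j hj => choose_add_lt_choose_add (mem_range.mp hj)
    rw [sum_add_distrib, sum_const, card_range, smul_eq_mul, mul_one] at this
    rw [sum_range_succ]
    linarith
  have hX : 1 ≤ X := choose_pos (by omega)
  rw [add_assoc b c 1, choose_add_eq_choose_add_sum]
  nlinarith

end Nat

theorem Finset.erase_subset_of_sdiff_eq_singleton {α : Type*} [DecidableEq α] {s A : Finset α}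
    {x : α} (h : A \ s = {x}) :
    x ∈ A ∧ x ∉ s ∧ A.erase x ⊆ s := by
  have hx : x ∈ A \ s := h ▸ mem_singleton_self x
  refine ⟨(mem_sdiff.mp hx).1, (mem_sdiff.mp hx).2, fun y hy => ?_⟩
  by_contra hys
  have : y ∈ A \ s := mem_sdiff.mpr ⟨mem_of_mem_erase hy, hys⟩
  rw [h, mem_singleton] at this
  exact ne_of_mem_erase hy this

theorem card_filter_sdiff_Icc_eq_singleton_le (n m k t x : ℕ) (ht : t ≤ m) :
    #((powersetCard k (Icc 1 n)).filter
        (fun A => A \ Icc 1 m = {x} ∧ (A ∩ Icc 1 t).Nonempty)) ≤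
      #((powersetCard (k - 1) (Icc 1 m)).filter (fun B => (B ∩ Icc 1 t).Nonempty)) := by
  refine card_le_card_of_injOn (fun A => A.erase x) (fun A hA => ?_) (fun A hA A' hA' h => ?_)
  · simp only [coe_filter, mem_powersetCard, Set.mem_ofPred_eq] at hA ⊢
    obtain ⟨⟨-, hcard⟩, hsd, y, hy⟩ := hA
    obtain ⟨hxA, hxm, hsub⟩ := erase_subset_of_sdiff_eq_singleton hsd
    have hyx : y ≠ x := fun h => hxm (h ▸ Icc_subset_Icc_right ht (mem_inter.mp hy).2)
    exact ⟨⟨hsub, by rw [card_erase_of_mem hxA, hcard]⟩, y,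
      mem_inter.mpr ⟨mem_erase.mpr ⟨hyx, (mem_inter.mp hy).1⟩, (mem_inter.mp hy).2⟩⟩
  · simp only [coe_filter, Set.mem_ofPred_eq] at hA hA'
    rw [← insert_erase (erase_subset_of_sdiff_eq_singleton hA.2.1).1,
      ← insert_erase (erase_subset_of_sdiff_eq_singleton hA'.2.1).1]
    exact congrArg (insert x) h

theorem card_filter_inter_nonempty_add_choose (m r t : ℕ) :
    #((powersetCard r (Icc 1 m)).filter (fun B => (B ∩ Icc 1 t).Nonempty)) +
      (m - t).choose r = m.choose r := by
  have hcompl : (powersetCard r (Icc 1 m)).filter (fun B => ¬(B ∩ Icc 1 t).Nonempty) =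
      powersetCard r (Icc (t + 1) m) := by
    ext B
    simp only [mem_filter, mem_powersetCard, not_nonempty_iff_eq_empty,
      eq_empty_iff_forall_notMem, mem_inter, subset_iff, mem_Icc, not_and]
    constructor
    · rintro ⟨⟨hsub, hcard⟩, hdisj⟩
      exact ⟨fun y hy => ⟨by have := hdisj y hy; have := hsub hy; omega, (hsub hy).2⟩, hcard⟩
    · rintro ⟨hsub, hcard⟩
      exact ⟨⟨fun y hy => ⟨by have := hsub hy; omega, (hsub hy).2⟩, hcard⟩,
        fun y hy _ => by have := hsub hy; omega⟩
  have := card_filter_add_card_filter_not (s := powersetCard r (Icc 1 m))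
    (p := fun B => (B ∩ Icc 1 t).Nonempty)
  rwa [hcompl, card_powersetCard, card_powersetCard, Nat.card_Icc, Nat.card_Icc,
    Nat.add_sub_cancel, Nat.add_sub_add_right] at this

theorem card_E0_add_choose_le (n k s : ℕ) (hks : 0 < k * s) :
    #(E0 n k s) + (k * s - 1).choose (k - 1) ≤
      (k * s + k - 2).choose k + (k * s + k - 2).choose (k - 1) + (n + 1 - (k * s + k)) := by
  have hk : 0 < k := Nat.pos_of_ne_zero (by rintro rfl; simp at hks)
  have hQ := card_filter_sdiff_Icc_eq_singleton_le n (k * s + k - 2) k (k - 1) (k * s + k - 1)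
    (by omega)
  have hS := card_filter_inter_nonempty_add_choose (k * s + k - 2) (k - 1) (k - 1)
  have hR : #((Icc (k * s + k) n).image (fun x => insert x (Icc 1 (k - 1)))) ≤
      n + 1 - (k * s + k) := by
    simpa using card_image_le (s := Icc (k * s + k) n) (f := fun x => insert x (Icc 1 (k - 1)))
  have hE0 : #(E0 n k s) ≤ _ :=
    (card_union_le _ _).trans (Nat.add_le_add_right (card_union_le _ _) _)
  rw [card_powersetCard, Nat.card_Icc, Nat.add_sub_cancel] at hE0
  rw [show k * s + k - 2 - (k - 1) = k * s - 1 by omega] at hS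
  omega

theorem insert_insert_one_sdiff_Icc {m x : ℕ} {T : Finset ℕ} (hm : 1 ≤ m) (hx : m < x)
    (hT : T ⊆ Icc 2 m) : insert x (insert 1 T) \ Icc 1 m = {x} := by
  ext y
  have := @hT y
  simp only [mem_sdiff, mem_insert, mem_singleton, mem_Icc] at this ⊢
  constructor
  · rintro ⟨hy | hy | hy, hyI⟩ <;> [exact hy; omega; (have := this hy; omega)]
  · rintro rfl; exact ⟨Or.inl rfl, by omega⟩

theorem insert_insert_one_inter_Icc {m x : ℕ} {T : Finset ℕ} (hx : m < x) (hT : T ⊆ Icc 2 m) :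
    insert x (insert 1 T) ∩ Icc 2 m = T := by
  ext y
  have := @hT y
  simp only [mem_inter, mem_insert, mem_Icc] at this ⊢
  constructor
  · rintro ⟨hy | hy | hy, hyI⟩ <;> [omega; omega; exact hy]
  · exact fun hy => ⟨Or.inr (Or.inr hy), this hy⟩

theorem card_image_insert_insert_one (n m k : ℕ) (hm : 1 ≤ m) :
    #((Icc (m + 1) n ×ˢ powersetCard k (Icc 2 m)).image fun p => insert p.1 (insert 1 p.2)) =
      (n - m) * (m - 1).choose k := by
  rw [card_image_of_injOn, card_product, card_powersetCard, Nat.card_Icc, Nat.card_Icc,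
    Nat.add_sub_add_right, show m + 1 - 2 = m - 1 by omega]
  rintro ⟨x, T⟩ hp ⟨x', T'⟩ hp' h
  simp only [coe_product, Set.mem_prod, mem_coe, mem_Icc, mem_powersetCard] at hp hp'
  have hx : x = x' := by
    simpa using (insert_insert_one_sdiff_Icc hm (by omega) hp.2.1).symm.trans
      ((congrArg (· \ Icc 1 m) h).trans (insert_insert_one_sdiff_Icc hm (by omega) hp'.2.1))
  refine Prod.ext hx ?_
  rw [← insert_insert_one_inter_Icc (x := x) (by omega) hp.2.1,
    ← insert_insert_one_inter_Icc (x := x') (by omega) hp'.2.1]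
  exact congrArg (· ∩ Icc 2 m) h

theorem choose_add_mul_choose_le_card_E1 (n k s : ℕ) (hk : 2 ≤ k) (hks : 0 < k * s) :
    (k * s + k - 2).choose k + (n - (k * s + k - 2)) * (k * s + k - 3).choose (k - 2) ≤
      #(E1 n k s) := by
  set m := k * s + k - 2
  have hm : 1 ≤ m := by omega
  set B := (Icc (m + 1) n ×ˢ powersetCard (k - 2) (Icc 2 m)).image
    fun p => insert p.1 (insert 1 p.2)
  have hB : ∀ A ∈ B, A \ Icc 1 m ≠ ∅ ∧ A ∈ E1 n k s := by
    simp only [B, mem_image, mem_product, mem_Icc, mem_powersetCard]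
    rintro _ ⟨⟨x, T⟩, ⟨hx, hT, hTcard⟩, rfl⟩
    dsimp only at hx hT hTcard ⊢
    have hsd := insert_insert_one_sdiff_Icc (x := x) hm (by omega) hT
    have h1T : 1 ∉ T := fun h => by have := mem_Icc.mp (hT h); omega
    have hxT : x ∉ insert 1 T := by
      rw [mem_insert, not_or]
      exact ⟨by omega, fun h => by have := mem_Icc.mp (hT h); omega⟩
    refine ⟨by simp [hsd], ?_⟩
    simp only [E1, mem_union, mem_filter, mem_powersetCard]
    refine Or.inr ⟨⟨?_, ?_⟩, by simp, x, mem_Icc.mpr ⟨by omega, hx.2⟩, hsd⟩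
    · intro y hy
      simp only [mem_insert] at hy
      rcases hy with rfl | rfl | hy
      · exact mem_Icc.mpr ⟨by omega, hx.2⟩
      · exact mem_Icc.mpr ⟨le_rfl, by omega⟩
      · exact Icc_subset_Icc (by norm_num) (by omega) (hT hy)
    · rw [card_insert_of_notMem hxT, card_insert_of_notMem h1T, hTcard]; omega
  have hdisj : Disjoint (powersetCard k (Icc 1 m)) B := by
    rw [disjoint_left]
    intro A hA hAB
    exact (hB A hAB).1 (sdiff_eq_empty_iff_subset.mpr (mem_powersetCard.mp hA).1)
  calc (k * s + k - 2).choose k + (n - m) * (k * s + k - 3).choose (k - 2)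
      = #(powersetCard k (Icc 1 m) ∪ B) := by
        rw [card_union_of_disjoint hdisj, card_powersetCard, Nat.card_Icc,
          card_image_insert_insert_one n m (k - 2) hm]
        congr 2
    _ ≤ #(E1 n k s) := by
        refine card_le_card (union_subset (fun A hA => ?_) fun A hA => (hB A hA).2)
        simp only [E1, mem_union]; exact Or.inl hA

theorem stmt11_general (k l : ℕ) (hk : 3 ≤ k) (hkl : k ≤ l + 3)
    (s : ℕ) (hs : 1 ≤ s) :
    (E0 (k * (s + 1) + l) k s).card ≤ (E1 (k * (s + 1) + l) k s).card ∧
    (Nat.choose (k * s + k - 2) (k - 1) : ℤ) - Nat.choose (k * s - 1) (k - 1) + l + 1 ≤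
      ((l : ℤ) + 2) * Nat.choose (k * s + k - 3) (k - 2) := by
  have hks : 0 < k * s := Nat.mul_pos (by omega) hs
  have hn : k * (s + 1) + l = k * s + k + l := by ring
  have hkey := Nat.choose_succ_add_le (k * s - 1) (k - 2) l (by omega)
  rw [show k * s - 1 + (k - 2) + 1 = k * s + k - 2 by omega, show k - 2 + 1 = k - 1 by omega,
    show k * s - 1 + (k - 2) = k * s + k - 3 by omega] at hkey
  have hE0 := card_E0_add_choose_le (k * (s + 1) + l) k s hks
  have hE1 := choose_add_mul_choose_le_card_E1 (k * (s + 1) + l) k s (by omega) hks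
  rw [hn, show k * s + k + l + 1 - (k * s + k) = l + 1 by omega] at hE0
  rw [hn, show k * s + k + l - (k * s + k - 2) = l + 2 by omega] at hE1
  refine ⟨by rw [hn]; omega, ?_⟩
  zify at hkey
  linarith

/-- for `k ≤ ℓ + 3`, `|E₁| ≥ |E₀|`. -/
theorem stmt11 (k l : ℕ) (hk : 3 ≤ k) (hl : 1 ≤ l) (hkl : k ≤ l + 3)
    (s : ℕ) (hs : 1 ≤ s) :
    (E0 (k * (s + 1) + l) k s).card ≤ (E1 (k * (s + 1) + l) k s).card ∧
    (Nat.choose (k * s + k - 2) (k - 1) : ℤ) - Nat.choose (k * s - 1) (k - 1) + l + 1 ≤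
      ((l : ℤ) + 2) * Nat.choose (k * s + k - 3) (k - 2) :=
  stmt11_general k l hk hkl s hs
end

section
/- Let k ≥ 2 and s ≥ 1 be integers and let F ⊆ binom([n],k) be a k-graph with ν(F) ≤ s. Suppose U ⊆ [n] satisfies |U| = ks + k − 2 and every k-element subset of U belongs to F. Then every edge F ∈ F satisfies |F ∖ U| ≤ 1; in particular, no edge of F contains two vertices of [n] ∖ U. -/
/-! If an edge `A` had two vertices outside `U`, it would meet `U` in at most `k - 2` vertices,
so `U \ A` would still have `ks` vertices. Since all `k`-subsets of `U` are edges, `U \ A` splits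
into `s` disjoint edges, which together with `A` form a matching of size `s + 1`. -/

theorem exists_pairwiseDisjoint_subset_powersetCard {α : Type*} [DecidableEq α] {k : ℕ}
    (hk : 0 < k) (s : ℕ) {V : Finset α} (hV : k * s ≤ V.card) :
    ∃ M ⊆ V.powersetCard k, M.card = s ∧ (M : Set (Finset α)).PairwiseDisjoint id := by
  induction s generalizing V with
  | zero => exact ⟨∅, Finset.empty_subset _, rfl, by simp⟩
  | succ s ih =>
    rw [Nat.mul_succ] at hV
    obtain ⟨B, hBV, hBcard⟩ := Finset.exists_subset_card_eq (show k ≤ V.card by omega)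
    have hrest : k * s ≤ (V \ B).card := by
      rw [Finset.card_sdiff_of_subset hBV, hBcard]
      omega
    obtain ⟨M, hMV, hMcard, hMdisj⟩ := ih hrest
    have hBM : ∀ C ∈ M, Disjoint B C := fun C hC =>
      Finset.disjoint_of_subset_right (Finset.mem_powersetCard.mp (hMV hC)).1
        Finset.disjoint_sdiff
    have hBnotM : B ∉ M := fun h =>
      (Finset.card_pos.mp (hBcard ▸ hk)).ne_empty (disjoint_self.mp (hBM B h))
    refine ⟨insert B M, ?_, by rw [Finset.card_insert_of_notMem hBnotM, hMcard], ?_⟩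
    · refine Finset.insert_subset (Finset.mem_powersetCard.mpr ⟨hBV, hBcard⟩) ?_
      exact hMV.trans (Finset.powersetCard_mono Finset.sdiff_subset)
    · rw [Finset.coe_insert]
      exact hMdisj.insert fun C hC _ => hBM C hC

theorem card_le_matchingNumber {F M : Finset (Finset ℕ)} (hMF : M ⊆ F)
    (hM : (M : Set (Finset ℕ)).PairwiseDisjoint id) : M.card ≤ matchingNumber F :=
  le_csSup ⟨F.card, fun _ ⟨_, hN, hc, _⟩ => hc ▸ Finset.card_le_card hN⟩ ⟨M, hMF, rfl, hM⟩

theorem succ_le_matchingNumber_of_disjoint_clique {k s : ℕ} (hk : 0 < k)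
    {F : Finset (Finset ℕ)} {A V : Finset ℕ} (hA : A ∈ F) (hAne : A.Nonempty)
    (hAV : Disjoint A V) (hclique : V.powersetCard k ⊆ F) (hV : k * s ≤ V.card) :
    s + 1 ≤ matchingNumber F := by
  obtain ⟨M, hMV, hMcard, hMdisj⟩ := exists_pairwiseDisjoint_subset_powersetCard hk s hV
  have hAM : ∀ B ∈ M, Disjoint A B := fun B hB =>
    Finset.disjoint_of_subset_right (Finset.mem_powersetCard.mp (hMV hB)).1 hAV
  have hAnotM : A ∉ M := fun h => hAne.ne_empty (disjoint_self.mp (hAM A h))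
  calc s + 1 = (insert A M).card := by rw [Finset.card_insert_of_notMem hAnotM, hMcard]
    _ ≤ matchingNumber F := by
      refine card_le_matchingNumber (Finset.insert_subset hA (hMV.trans hclique)) ?_
      rw [Finset.coe_insert]
      exact hMdisj.insert fun B hB _ => hAM B hB

theorem stmt12_general (n k s : ℕ)
    (F : Finset (Finset ℕ)) (hF : F ⊆ Finset.powersetCard k (Finset.Icc 1 n))
    (hnu : matchingNumber F ≤ s)
    (U : Finset ℕ) (hUcard : U.card = k * s + k - 2)
    (hclique : Finset.powersetCard k U ⊆ F) :
    ∀ A ∈ F, (A \ U).card ≤ 1 := by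
  intro A hA
  by_contra! hout
  have hAcard : A.card = k := (Finset.mem_powersetCard.mp (hF hA)).2
  have hsplit := Finset.card_sdiff_add_card_inter A U
  have hrest : k * s ≤ (U \ A).card := by
    have := Finset.card_sdiff_add_card_inter U A
    rw [Finset.inter_comm] at this
    omega
  have hle := succ_le_matchingNumber_of_disjoint_clique (by omega) hA
    (Finset.card_pos.mp (by omega)) Finset.disjoint_sdiff
    ((Finset.powersetCard_mono Finset.sdiff_subset).trans hclique) hrest
  omega

/-- every edge leaves at most one vertex outside a clique of size `ks+k-2`. -/
theorem stmt12 (n k s : ℕ) (hk : 2 ≤ k) (hs : 1 ≤ s)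
    (F : Finset (Finset ℕ)) (hF : F ⊆ Finset.powersetCard k (Finset.Icc 1 n))
    (hnu : matchingNumber F ≤ s)
    (U : Finset ℕ) (hU : U ⊆ Finset.Icc 1 n) (hUcard : U.card = k * s + k - 2)
    (hclique : Finset.powersetCard k U ⊆ F) :
    ∀ A ∈ F, (A \ U).card ≤ 1 :=
  stmt12_general n k s F hF hnu U hUcard hclique
end

section
/- Let n, k, t be positive integers with n ≥ 2k and t ≥ 2. If A₁, A₂, ..., A_t ⊆ binom([n],k) are non-empty cross-intersecting families, then Σ_{i=1}^{t} |A_i| ≤ max{ C(n,k) − C(n−k, k) + t − 1, t·C(n−1, k−1) }. -/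
attribute [-instance] instDecidableEqFin

open Finset Nat

namespace SFQ

/-- ratio monotonicity: for `a ≤ b`, `i ≤ w`: `C w a * C i b ≤ C i a * C w b`. -/
lemma ratio_mono {a b i w : ℕ} (hab : a ≤ b) (hiw : i ≤ w) :
    w.choose a * i.choose b ≤ i.choose a * w.choose b := by
  rcases le_or_gt b i with hbi | hib
  · -- b ≤ i ≤ w
    have hbw : b ≤ w := hbi.trans hiw
    have h1 : i.choose b * b.choose a = i.choose a * (i - a).choose (b - a) :=
      Nat.choose_mul (n := i) hab
    have h2 : w.choose b * b.choose a = w.choose a * (w - a).choose (b - a) :=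
      Nat.choose_mul (n := w) hab
    have hmono : (i - a).choose (b - a) ≤ (w - a).choose (b - a) :=
      Nat.choose_le_choose _ (Nat.sub_le_sub_right hiw a)
    have hpos : 0 < b.choose a := Nat.choose_pos hab
    have : w.choose a * i.choose b * b.choose a ≤ i.choose a * w.choose b * b.choose a := by
      calc w.choose a * i.choose b * b.choose a
          = w.choose a * (i.choose b * b.choose a) := by ring
        _ = w.choose a * (i.choose a * (i - a).choose (b - a)) := by rw [h1]
        _ ≤ w.choose a * (i.choose a * (w - a).choose (b - a)) := by
            exact Nat.mul_le_mul_left _ (Nat.mul_le_mul_left _ hmono)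
        _ = i.choose a * (w.choose b * b.choose a) := by rw [h2]; ring
        _ = i.choose a * w.choose b * b.choose a := by ring
    exact Nat.le_of_mul_le_mul_right this hpos
  · -- i < b : C i b = 0
    have : i.choose b = 0 := Nat.choose_eq_zero_of_lt hib
    simp [this]

/-- hockey-stick style: `C w (k+1) = C ρ (k+1) + ∑_{i ∈ [ρ, w)} C i k`. -/
lemma choose_eq_add_sum {ρ w : ℕ} (k : ℕ) (h : ρ ≤ w) :
    w.choose (k + 1) = ρ.choose (k + 1) + ∑ i ∈ Ico ρ w, i.choose k := by
  induction w with
  | zero => simp_all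
  | succ w ih =>
    rcases Nat.eq_or_lt_of_le h with rfl | h'
    · simp
    · have hw : ρ ≤ w := Nat.lt_succ_iff.mp h'
      rw [Finset.sum_Ico_succ_top hw, Nat.choose_succ_succ w k, ih hw]
      omega

end SFQ

namespace SFQ2
open SFQ

/-- `SB w * SA m ≤ SB m * SA w` (cross-ratio monotonicity of partial sums). -/
lemma ineq2tau {k ρ w m : ℕ} (hkρ : k ≤ ρ) (hw : ρ + 1 ≤ w) (hm : w ≤ m) :
    (∑ i ∈ Ico (ρ+1) w, i.choose ρ) * (∑ i ∈ Ico (ρ+1) m, i.choose k)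
      ≤ (∑ i ∈ Ico (ρ+1) m, i.choose ρ) * (∑ i ∈ Ico (ρ+1) w, i.choose k) := by
  rw [← Finset.sum_Ico_consecutive (fun i => i.choose ρ) hw hm,
      ← Finset.sum_Ico_consecutive (fun i => i.choose k) hw hm]
  rw [Nat.mul_add, Nat.add_mul]
  refine Nat.add_le_add_left ?_ _
  rw [Finset.sum_mul_sum, Finset.sum_mul_sum]
  rw [Finset.sum_comm]
  refine Finset.sum_le_sum fun i hi => Finset.sum_le_sum fun j hj => ?_
  simp only [mem_Ico] at hi hj
  have hji : j ≤ i := le_trans (le_of_lt hj.2) hi.1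
  have := ratio_mono hkρ hji (a := k) (b := ρ)
  calc j.choose ρ * i.choose k = i.choose k * j.choose ρ := Nat.mul_comm _ _
    _ ≤ j.choose k * i.choose ρ := this
    _ = i.choose ρ * j.choose k := Nat.mul_comm _ _

lemma ineq4tau {k ρ m : ℕ} (hkρ : k ≤ ρ) :
    (∑ i ∈ Ico (ρ+1) m, i.choose k) ≤ (∑ i ∈ Ico (ρ+1) m, i.choose ρ) * ρ.choose k := by
  rw [Finset.sum_mul]
  refine Finset.sum_le_sum fun i hi => ?_
  simp only [mem_Ico] at hi
  have hρi : ρ ≤ i := le_of_lt hi.1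
  rw [Nat.choose_mul (n := i) hkρ]
  have : 0 < (i - k).choose (ρ - k) := Nat.choose_pos (Nat.sub_le_sub_right hρi k)
  calc i.choose k = i.choose k * 1 := (Nat.mul_one _).symm
    _ ≤ i.choose k * (i-k).choose (ρ-k) := Nat.mul_le_mul_left _ this

/-- The abstract LP step for the master induction, in ℤ. -/
lemma starstar {E D1 c1 c2 c3 Cv Y β : ℤ}
    (hIH : β * c1 ≤ D1 * Y) (hY : 0 ≤ Y) (hβ0 : 0 ≤ β) (hβ : β ≤ D1)
    (hc1 : 0 ≤ c1) (hc3 : 0 ≤ c3) (hE : 0 ≤ E) (hCv : 0 ≤ Cv)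
    (h1 : Cv * c3 ≤ E * c2) (h2 : (Cv + D1) * c3 ≤ E * (c2 + c1)) :
    (Cv + β) * c3 ≤ E * (c2 + Y) := by
  rcases eq_or_lt_of_le (le_trans hβ0 hβ) with hD | hD
  · -- D1 = 0: β = 0
    have hβz : β = 0 := le_antisymm (hD ▸ hβ) hβ0
    subst hβz
    nlinarith
  · -- D1 > 0: multiply through by D1
    have key : D1 * ((Cv + β) * c3) ≤ D1 * (E * (c2 + Y)) := by
      rcases le_total (D1 * c3) (E * c1) with hcase | hcase
      · nlinarith
      · nlinarith
    exact le_of_mul_le_mul_left key hD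

end SFQ2



open Finset Nat Finset.Colex

namespace SFQ
variable {n : ℕ}

/-- Colex rank (1-based): number of sets `≤c s` of the same size. -/
noncomputable def R (s : Finset (Fin n)) : ℕ := (Colex.initSeg s).card

lemma R_pos (s : Finset (Fin n)) : 1 ≤ R s := Finset.card_pos.mpr Colex.initSeg_nonempty

lemma R_empty : R (∅ : Finset (Fin n)) = 1 := by
  have : Colex.initSeg (∅ : Finset (Fin n)) = {∅} := by
    ext t
    simp only [Colex.mem_initSeg, Finset.card_empty, Finset.mem_singleton]
    constructor
    · rintro ⟨h1, -⟩; exact (Finset.card_eq_zero.mp h1.symm)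
    · rintro rfl; simp
  rw [R, this, Finset.card_singleton]

lemma R_card_zero {s : Finset (Fin n)} (hs : #s = 0) : R s = 1 := by
  rw [Finset.card_eq_zero.mp hs, R_empty]

lemma R_le {s : Finset (Fin n)} {m : ℕ} (hsm : ∀ x ∈ s, (x : ℕ) < m) :
    R s ≤ m.choose #s := by
  have hsub : Colex.initSeg s ⊆ powersetCard #s (univ.filter fun x : Fin n => (x : ℕ) < m) := by
    intro t ht
    rw [Colex.mem_initSeg] at ht
    rw [Finset.mem_powersetCard]
    refine ⟨fun a ha => ?_, ht.1.symm⟩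
    rw [Finset.mem_filter]
    refine ⟨Finset.mem_univ _, ?_⟩
    by_cases has : a ∈ s
    · exact hsm a has
    · obtain ⟨b, hb, -, hab⟩ := Colex.toColex_le_toColex.mp ht.2 ha has
      exact lt_of_le_of_lt (Fin.le_iff_val_le_val.mp hab) (hsm b hb)
  calc R s ≤ #(powersetCard #s (univ.filter fun x : Fin n => (x : ℕ) < m)) :=
        Finset.card_le_card hsub
    _ = (#(univ.filter fun x : Fin n => (x : ℕ) < m)).choose #s := Finset.card_powersetCard _ _
    _ ≤ m.choose #s := by
        refine Nat.choose_le_choose _ ?_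
        have : ∀ x ∈ (univ.filter fun x : Fin n => (x : ℕ) < m), (x : ℕ) ∈ Finset.range m := by
          intro x hx; rw [Finset.mem_range]; exact (Finset.mem_filter.mp hx).2
        calc #(univ.filter fun x : Fin n => (x : ℕ) < m)
            ≤ #(Finset.range m) := Finset.card_le_card_of_injOn _ this
              (fun a _ b _ h => Fin.val_injective h)
          _ = m := Finset.card_range m

lemma R_rec {s : Finset (Fin n)} (hs : s.Nonempty) :
    R s = ((s.max' hs : Fin n) : ℕ).choose #s + R (s.erase (s.max' hs)) := by
  classical
  set v := s.max' hs with hv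
  have hvs : v ∈ s := s.max'_mem hs
  -- split initSeg s by membership of v
  have hsplit : #(Colex.initSeg s) =
      #((Colex.initSeg s).filter (fun t => v ∉ t)) +
      #((Colex.initSeg s).filter (fun t => v ∈ t)) := by
    have h0 := Finset.card_filter_add_card_filter_not
      (s := Colex.initSeg s) (p := fun t => v ∉ t)
    simp only [not_not] at h0
    exact h0.symm
  -- part without v: #s-subsets of Iio v
  have hpart2 : (Colex.initSeg s).filter (fun t => v ∉ t) = powersetCard #s (Finset.Iio v) := by
    ext t
    simp only [Finset.mem_filter, Colex.mem_initSeg, Finset.mem_powersetCard]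
    constructor
    · rintro ⟨⟨hcard, hle⟩, hvt⟩
      refine ⟨fun a ha => ?_, hcard.symm⟩
      rw [Finset.mem_Iio]
      have hav : a ≤ v := by
        by_cases has : a ∈ s
        · exact s.le_max' a has
        · obtain ⟨b, hb, -, hab⟩ := Colex.toColex_le_toColex.mp hle ha has
          exact le_trans hab (s.le_max' b hb)
      exact lt_of_le_of_ne hav (fun h => hvt (h ▸ ha))
    · rintro ⟨hsub, hcard⟩
      have hvt : v ∉ t := fun h => absurd (Finset.mem_Iio.mp (hsub h)) (lt_irrefl v)
      refine ⟨⟨hcard.symm, ?_⟩, hvt⟩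
      rw [Colex.toColex_le_toColex]
      intro a ha _
      exact ⟨v, hvs, hvt, le_of_lt (Finset.mem_Iio.mp (hsub ha))⟩
  -- part with v: bijection with initSeg (erase s v)
  have hpart1 : #((Colex.initSeg s).filter (fun t => v ∈ t)) = R (s.erase v) := by
    rw [R]
    refine Finset.card_bij (fun t _ => t.erase v) ?_ ?_ ?_
    · intro t ht
      simp only [Finset.mem_filter, Colex.mem_initSeg] at ht
      obtain ⟨⟨hcard, hle⟩, hvt⟩ := ht
      rw [Colex.mem_initSeg]
      constructor
      · rw [Finset.card_erase_of_mem hvt, Finset.card_erase_of_mem hvs, hcard]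
      · have h1 : ({v} : Finset (Fin n)) ⊆ t := Finset.singleton_subset_iff.mpr hvt
        have h2 : ({v} : Finset (Fin n)) ⊆ s := Finset.singleton_subset_iff.mpr hvs
        have := (Colex.toColex_sdiff_le_toColex_sdiff h1 h2).mpr hle
        simpa [Finset.sdiff_singleton_eq_erase] using this
    · intro t1 ht1 t2 ht2 h
      simp only [Finset.mem_filter] at ht1 ht2
      have h' : t1.erase v = t2.erase v := h
      rw [← Finset.insert_erase ht1.2, ← Finset.insert_erase ht2.2, h']
    · intro u hu
      rw [Colex.mem_initSeg] at hu
      obtain ⟨hcard, hle⟩ := hu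
      have hvu : v ∉ u := by
        intro hvu
        obtain ⟨b, hb, -, hvb⟩ := Colex.toColex_le_toColex.mp hle hvu (Finset.notMem_erase v s)
        have hbv : b < v := lt_of_le_of_ne (s.le_max' b (Finset.mem_of_mem_erase hb))
          (Finset.ne_of_mem_erase hb)
        exact absurd (lt_of_le_of_lt hvb hbv) (lt_irrefl v)
      refine ⟨insert v u, ?_, ?_⟩
      · simp only [Finset.mem_filter, Colex.mem_initSeg]
        refine ⟨⟨?_, ?_⟩, Finset.mem_insert_self v u⟩
        · rw [Finset.card_insert_of_notMem hvu, ← hcard,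
            Finset.card_erase_of_mem hvs]
          have : 1 ≤ #s := Finset.card_pos.mpr hs
          omega
        · have h1 : ({v} : Finset (Fin n)) ⊆ insert v u := by simp
          have h2 : ({v} : Finset (Fin n)) ⊆ s := Finset.singleton_subset_iff.mpr hvs
          rw [← Colex.toColex_sdiff_le_toColex_sdiff h1 h2]
          have e1 : insert v u \ {v} = u := by
            rw [Finset.sdiff_singleton_eq_erase, Finset.erase_insert hvu]
          have e2 : s \ {v} = s.erase v := Finset.sdiff_singleton_eq_erase v s
          rw [e1, e2]
          exact hle
      · show (insert v u).erase v = u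
        rw [Finset.erase_insert hvu]
  rw [R, hsplit, hpart2, hpart1, Finset.card_powersetCard, Fin.card_Iio]

end SFQ

namespace SFQ
variable {n : ℕ}

/-- Remove the `d` smallest elements of `s`. -/
def stripMin (d : ℕ) (s : Finset (Fin n)) : Finset (Fin n) :=
  s.filter fun x => d ≤ #(s.filter (· < x))

lemma mem_stripMin {d : ℕ} {s : Finset (Fin n)} {x : Fin n} :
    x ∈ stripMin d s ↔ x ∈ s ∧ d ≤ #(s.filter (· < x)) := Finset.mem_filter

lemma stripMin_zero (s : Finset (Fin n)) : stripMin 0 s = s := by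
  simp [stripMin]

lemma stripMin_subset {d : ℕ} {s : Finset (Fin n)} : stripMin d s ⊆ s := Finset.filter_subset _ _

lemma stripMin_erase_min {d : ℕ} {s : Finset (Fin n)} (hs : s.Nonempty) :
    stripMin d (s.erase (s.min' hs)) = stripMin (d + 1) s := by
  set μ := s.min' hs with hμ
  ext x
  simp only [mem_stripMin, Finset.mem_erase]
  constructor
  · rintro ⟨⟨hxμ, hxs⟩, hd⟩
    refine ⟨hxs, ?_⟩
    have hsub : (s.erase μ).filter (· < x) = (s.filter (· < x)).erase μ := by
      ext y; simp only [Finset.mem_filter, Finset.mem_erase]; tauto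
    have hμx : μ ∈ s.filter (· < x) := by
      rw [Finset.mem_filter]
      exact ⟨s.min'_mem hs, lt_of_le_of_ne (s.min'_le x hxs) (Ne.symm hxμ)⟩
    rw [hsub, Finset.card_erase_of_mem hμx] at hd
    have hpos : 0 < #(s.filter (· < x)) := Finset.card_pos.mpr ⟨μ, hμx⟩
    omega
  · rintro ⟨hxs, hd⟩
    have hxμ : x ≠ μ := by
      intro h
      have h0 : s.filter (· < x) = ∅ := by
        rw [Finset.filter_eq_empty_iff]
        intro y hy
        rw [h]
        exact not_lt.mpr (s.min'_le y hy)
      rw [h0] at hd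
      simp at hd
    refine ⟨⟨hxμ, hxs⟩, ?_⟩
    have hsub : (s.erase μ).filter (· < x) = (s.filter (· < x)).erase μ := by
      ext y; simp only [Finset.mem_filter, Finset.mem_erase]; tauto
    have hμx : μ ∈ s.filter (· < x) := by
      rw [Finset.mem_filter]
      exact ⟨s.min'_mem hs, lt_of_le_of_ne (s.min'_le x hxs) (Ne.symm hxμ)⟩
    rw [hsub, Finset.card_erase_of_mem hμx]
    omega

lemma stripMin_card {d : ℕ} {s : Finset (Fin n)} (hd : d ≤ #s) :
    #(stripMin d s) = #s - d := by
  induction d generalizing s with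
  | zero => rw [stripMin_zero]; simp
  | succ d ih =>
    have hs : s.Nonempty := Finset.card_pos.mp (by omega)
    rw [← stripMin_erase_min hs, ih]
    · rw [Finset.card_erase_of_mem (s.min'_mem hs)]; omega
    · rw [Finset.card_erase_of_mem (s.min'_mem hs)]; omega

lemma stripMin_insert_max {d : ℕ} {s : Finset (Fin n)} (hs : s.Nonempty)
    (hd : d + 1 ≤ #s) :
    stripMin d s = insert (s.max' hs) (stripMin d (s.erase (s.max' hs))) := by
  set v := s.max' hs with hv
  have hvs : v ∈ s := s.max'_mem hs
  ext x
  simp only [mem_stripMin, Finset.mem_insert, Finset.mem_erase]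
  constructor
  · rintro ⟨hxs, hdx⟩
    by_cases hxv : x = v
    · exact Or.inl hxv
    · refine Or.inr ⟨⟨hxv, hxs⟩, ?_⟩
      have : (s.erase v).filter (· < x) = s.filter (· < x) := by
        ext y
        simp only [Finset.mem_filter, Finset.mem_erase]
        constructor
        · tauto
        · rintro ⟨hy, hyx⟩
          have hxle : x ≤ v := s.le_max' x hxs
          exact ⟨⟨ne_of_lt (lt_of_lt_of_le hyx hxle), hy⟩, hyx⟩
      rw [this]; exact hdx
  · rintro (rfl | ⟨⟨hxv, hxs⟩, hdx⟩)
    · refine ⟨hvs, ?_⟩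
      have : s.erase v ⊆ s.filter (· < v) := by
        intro y hy
        rw [Finset.mem_filter]
        exact ⟨Finset.mem_of_mem_erase hy,
          lt_of_le_of_ne (s.le_max' y (Finset.mem_of_mem_erase hy)) (Finset.ne_of_mem_erase hy)⟩
      have h2 := Finset.card_le_card this
      rw [Finset.card_erase_of_mem hvs] at h2
      omega
    · refine ⟨hxs, ?_⟩
      refine le_trans hdx (Finset.card_le_card ?_)
      intro y hy
      rw [Finset.mem_filter] at hy ⊢
      exact ⟨Finset.mem_of_mem_erase hy.1, hy.2⟩

open scoped FinsetFamily in
lemma shadow_initSeg_iterate {d : ℕ} {s : Finset (Fin n)} (hd : d ≤ #s) :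
    (shadow)^[d] (Colex.initSeg s) = Colex.initSeg (stripMin d s) := by
  induction d generalizing s with
  | zero => rw [stripMin_zero]; rfl
  | succ d ih =>
    have hs : s.Nonempty := Finset.card_pos.mp (by omega)
    rw [Function.iterate_succ_apply, Colex.shadow_initSeg hs, ih, stripMin_erase_min hs]
    rw [Finset.card_erase_of_mem (s.min'_mem hs)]
    omega

lemma le_max'_val {s : Finset (Fin n)} (hs : s.Nonempty) : #s ≤ ((s.max' hs : Fin n) : ℕ) + 1 := by
  have hsub : s ⊆ Finset.Iio (s.max' hs) ∪ {s.max' hs} := by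
    intro y hy
    rcases lt_or_eq_of_le (s.le_max' y hy) with h | h
    · exact Finset.mem_union_left _ (Finset.mem_Iio.mpr h)
    · exact Finset.mem_union_right _ (Finset.mem_singleton.mpr h)
  calc #s ≤ #(Finset.Iio (s.max' hs) ∪ {s.max' hs}) := Finset.card_le_card hsub
    _ ≤ #(Finset.Iio (s.max' hs)) + 1 := le_trans (Finset.card_union_le _ _) (by simp)
    _ = ((s.max' hs : Fin n) : ℕ) + 1 := by rw [Fin.card_Iio]

/-- lower bound: the rank of the top-`k` part is at least `C (#s) k`. -/
lemma R_strip_ge (k : ℕ) {s : Finset (Fin n)} (hk : k ≤ #s) :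
    (#s).choose k ≤ R (stripMin (#s - k) s) := by
  induction k generalizing s with
  | zero =>
    have h0 : #(stripMin (#s - 0) s) = 0 := by rw [stripMin_card (by omega)]; omega
    rw [R_card_zero h0, Nat.choose_zero_right]
  | succ k ih =>
    have hs : s.Nonempty := Finset.card_pos.mp (by omega)
    set v := s.max' hs with hv
    have hvs : v ∈ s := s.max'_mem hs
    have hins := stripMin_insert_max hs (d := #s - (k+1)) (by omega)
    have hcards : #(s.erase v) = #s - 1 := by
      rw [Finset.card_erase_of_mem hvs]
    have hd' : #s - (k+1) = #(s.erase v) - k := by omega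
    -- strip of erase
    have hstrip_ne : v ∉ stripMin (#s - (k+1)) (s.erase v) := fun h =>
      Finset.notMem_erase v s (stripMin_subset h)
    set u := stripMin (#s - (k+1)) (s.erase v) with hu
    have hcard_u : #u = k := by
      rw [hu, stripMin_card (by omega), hcards]; omega
    have hne : (insert v u).Nonempty := Finset.insert_nonempty _ _
    have hmax : (insert v u).max' hne = v := by
      apply le_antisymm
      · apply Finset.max'_le
        intro y hy
        rcases Finset.mem_insert.mp hy with rfl | hy
        · exact le_refl _
        · exact le_of_lt (lt_of_le_of_ne
            (s.le_max' y (Finset.mem_of_mem_erase (stripMin_subset hy)))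
            (Finset.ne_of_mem_erase (stripMin_subset hy)))
      · exact Finset.le_max' _ _ (Finset.mem_insert_self _ _)
    have hrec := R_rec hne
    rw [hmax] at hrec
    have herase : (insert v u).erase v = u := Finset.erase_insert hstrip_ne
    rw [herase] at hrec
    have hcard_ins : #(insert v u) = k + 1 := by
      rw [Finset.card_insert_of_notMem hstrip_ne, hcard_u]
    have hvval : #s - 1 ≤ (v : ℕ) := by
      have := le_max'_val hs
      omega
    have hRu : (#s - 1).choose k ≤ R u := by
      have h3 := ih (s := s.erase v) (by omega : k ≤ #(s.erase v))
      rw [hcards] at h3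
      have hEq : #s - 1 - k = #s - (k+1) := by omega
      rw [hEq] at h3
      exact h3
    have hsplitchoose : (#s).choose (k+1) = (#s - 1).choose k + (#s - 1).choose (k+1) := by
      have h1 : #s = (#s - 1) + 1 := by omega
      conv_lhs => rw [h1]
      rw [Nat.choose_succ_succ]
    calc (#s).choose (k+1) = (#s - 1).choose k + (#s - 1).choose (k+1) := hsplitchoose
      _ ≤ R u + (v : ℕ).choose (k+1) :=
          Nat.add_le_add hRu (Nat.choose_le_choose _ hvval)
      _ = R (insert v u) := by rw [hrec, hcard_ins, Nat.add_comm]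
      _ = R (stripMin (#s - (k+1)) s) := by rw [hins]

end SFQ

namespace SFQ
variable {n : ℕ}

lemma R_insert_max {v : Fin n} {u : Finset (Fin n)} (hvu : v ∉ u)
    (hall : ∀ y ∈ u, y < v) :
    R (insert v u) = (v : ℕ).choose (#u + 1) + R u := by
  have hne : (insert v u).Nonempty := Finset.insert_nonempty _ _
  have hmax : (insert v u).max' hne = v := by
    apply le_antisymm
    · apply Finset.max'_le
      intro y hy
      rcases Finset.mem_insert.mp hy with rfl | hy
      · exact le_refl _
      · exact le_of_lt (hall y hy)
    · exact Finset.le_max' _ _ (Finset.mem_insert_self _ _)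
  have hrec := R_rec hne
  rw [hmax, Finset.erase_insert hvu, Finset.card_insert_of_notMem hvu] at hrec
  exact hrec

set_option maxHeartbeats 1000000 in
theorem master : ∀ (k : ℕ) {r m : ℕ} {s : Finset (Fin n)},
    s.card = r → k ≤ r → r ≤ m → (∀ x ∈ s, (x : ℕ) < m) →
    ((R s : ℤ) - 1) * ((m.choose k : ℤ) - (r.choose k : ℤ))
      ≤ ((m.choose r : ℤ) - 1) * ((R (stripMin (r - k) s) : ℤ) - (r.choose k : ℤ)) := by
  intro k
  induction k with
  | zero =>
    intro r m s hs hkr hrm hsm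
    have h0 : #(stripMin (r - 0) s) = 0 := by
      rw [stripMin_card (by omega)]; omega
    rw [R_card_zero h0]
    simp
  | succ k ih =>
    intro r m s hs hkr hrm hsm
    obtain ⟨ρ, rfl⟩ : ∃ ρ, r = ρ + 1 := ⟨r - 1, by omega⟩
    have hkρ : k ≤ ρ := by omega
    have hsne : s.Nonempty := Finset.card_pos.mp (by omega)
    set v := s.max' hsne with hv
    have hvs : v ∈ s := s.max'_mem hsne
    set vv := (v : ℕ) with hvvdef
    have hvm : vv < m := hsm v hvs
    have hρvv : ρ ≤ vv := by
      have := le_max'_val hsne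
      omega
    set sE := s.erase v with hsE
    have hsEcard : #sE = ρ := by rw [hsE, Finset.card_erase_of_mem hvs, hs]; omega
    have hsElt : ∀ y ∈ sE, y < v := fun y hy =>
      lt_of_le_of_ne (s.le_max' y (Finset.mem_of_mem_erase hy)) (Finset.ne_of_mem_erase hy)
    have hsEm : ∀ x ∈ sE, (x : ℕ) < vv := fun x hx => hsElt x hx
    -- R recursion for s
    have hRs : R s = vv.choose (ρ + 1) + R sE := by
      have := R_rec hsne
      rw [hs] at this
      exact this
    -- strip decomposition
    have hstrip_eq : (ρ + 1) - (k + 1) = ρ - k := by omega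
    have hins : stripMin (ρ - k) s = insert v (stripMin (ρ - k) sE) := by
      have := stripMin_insert_max hsne (d := ρ - k) (by omega)
      rw [← hv, ← hsE] at this
      exact this
    set u := stripMin (ρ - k) sE with hu
    have hucard : #u = k := by rw [hu, stripMin_card (by omega), hsEcard]; omega
    have hvu : v ∉ u := fun h => Finset.notMem_erase v s (stripMin_subset h)
    have hRins : R (stripMin (ρ - k) s) = vv.choose (k + 1) + R u := by
      rw [hins, R_insert_max hvu (fun y hy => hsElt y (stripMin_subset hy)), hucard]
    -- IH for sE
    have hIH := ih (r := ρ) (m := vv) (s := sE) hsEcard hkρ hρvv hsEm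
    rw [← hu] at hIH
    have hY : (ρ.choose k : ℤ) ≤ (R u : ℤ) := by
      have h0 := R_strip_ge k (s := sE) (by omega)
      rw [hsEcard, ← hu] at h0
      exact_mod_cast h0
    have hβub : (R sE : ℤ) ≤ (vv.choose ρ : ℤ) := by
      have := R_le (s := sE) (m := vv) hsEm
      rw [hsEcard] at this
      exact_mod_cast this
    have hβlb : (1 : ℤ) ≤ (R sE : ℤ) := by exact_mod_cast R_pos sE
    have hc1 : (ρ.choose k : ℤ) ≤ (vv.choose k : ℤ) := by
      exact_mod_cast Nat.choose_le_choose k hρvv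
    have hc3 : ((ρ+1).choose (k+1) : ℤ) ≤ (m.choose (k+1) : ℤ) := by
      exact_mod_cast Nat.choose_le_choose (k+1) hrm
    have hE : (1 : ℤ) ≤ (m.choose (ρ+1) : ℤ) := by
      exact_mod_cast Nat.choose_pos hrm
    -- degenerate case vv = ρ
    rcases eq_or_lt_of_le hρvv with hvvρ | hvvρ
    · -- vv = ρ: C vv (ρ+1) = 0, R sE = 1, c2 = 0
      have hCv0 : vv.choose (ρ + 1) = 0 := Nat.choose_eq_zero_of_lt (by omega)
      have hRsE1 : (R sE : ℤ) = 1 := by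
        rw [← hvvρ, Nat.choose_self] at hβub
        exact le_antisymm (by exact_mod_cast hβub) hβlb
      rw [hstrip_eq, hRs, hRins, hCv0, Nat.zero_add]
      push_cast
      rw [hRsE1]
      have hk2 : ((ρ+1).choose (k+1) : ℤ) ≤ (vv.choose (k+1) : ℤ) + (ρ.choose k : ℤ) := by
        have he : (ρ+1).choose (k+1) = ρ.choose k + ρ.choose (k+1) := Nat.choose_succ_succ ρ k
        have he2 : (ρ.choose (k+1) : ℤ) ≤ (vv.choose (k+1) : ℤ) := by
          exact_mod_cast Nat.choose_le_choose (k+1) (le_of_eq hvvρ)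
        push_cast [he]
        linarith
      nlinarith [hY, hE]
    · -- main case: ρ + 1 ≤ vv
      have hρ1vv : ρ + 1 ≤ vv := hvvρ
      -- ℕ sum facts
      have ha_m := choose_eq_add_sum (ρ := ρ+1) (w := m) k (by omega)
      have ha_v1 := choose_eq_add_sum (ρ := ρ+1) (w := vv+1) k (by omega)
      have hb_m := choose_eq_add_sum (ρ := ρ+1) (w := m) ρ (by omega)
      have hb_v1 := choose_eq_add_sum (ρ := ρ+1) (w := vv+1) ρ (by omega)
      have hb_v := choose_eq_add_sum (ρ := ρ+1) (w := vv) ρ (by omega)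
      have hcρ := choose_eq_add_sum (ρ := ρ) (w := vv) k (le_of_lt hvvρ)
      rw [Nat.choose_self] at hb_m hb_v1 hb_v
      have hsplitρ : ∑ i ∈ Ico ρ vv, i.choose k
          = ρ.choose k + ∑ i ∈ Ico (ρ+1) vv, i.choose k := by
        rw [← Finset.sum_Ico_consecutive (fun i => i.choose k) (by omega : ρ ≤ ρ+1) hρ1vv]
        congr 1
        rw [Nat.Ico_succ_singleton, Finset.sum_singleton]
      rw [hsplitρ] at hcρ
      have hineq2v := SFQ2.ineq2tau (k := k) (ρ := ρ) (w := vv) (m := m) hkρ hρ1vv (by omega)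
      have hineq2v1 := SFQ2.ineq2tau (k := k) (ρ := ρ) (w := vv+1) (m := m) hkρ (by omega) (by omega)
      have hineq4 := SFQ2.ineq4tau (k := k) (ρ := ρ) (m := m) hkρ
      -- h1 in ℕ
      have h1N : vv.choose (ρ+1) * (∑ i ∈ Ico (ρ+1) m, i.choose k)
          ≤ (∑ i ∈ Ico (ρ+1) m, i.choose ρ) * (ρ.choose k + ∑ i ∈ Ico (ρ+1) vv, i.choose k) := by
        rw [hb_v, Nat.add_mul, Nat.mul_add, Nat.one_mul]
        exact Nat.add_le_add hineq4 hineq2v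
      -- ℤ versions
      have hE' : (0:ℤ) ≤ (m.choose (ρ+1) : ℤ) - 1 := by linarith
      have hc3Z : (m.choose (k+1) : ℤ) - ((ρ+1).choose (k+1) : ℤ)
          = ((∑ i ∈ Ico (ρ+1) m, i.choose k : ℕ) : ℤ) := by
        rw [ha_m]; push_cast; ring
      have hEZ : (m.choose (ρ+1) : ℤ) - 1 = ((∑ i ∈ Ico (ρ+1) m, i.choose ρ : ℕ) : ℤ) := by
        rw [hb_m]; push_cast; ring
      have hc2Z : (vv.choose (k+1) : ℤ) - (ρ.choose (k+1) : ℤ)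
          = ((ρ.choose k + ∑ i ∈ Ico (ρ+1) vv, i.choose k : ℕ) : ℤ) := by
        rw [hcρ]; push_cast; ring
      have h1 : (vv.choose (ρ+1) : ℤ) * ((m.choose (k+1) : ℤ) - ((ρ+1).choose (k+1):ℤ))
          ≤ ((m.choose (ρ+1) : ℤ) - 1) * ((vv.choose (k+1):ℤ) - (ρ.choose (k+1):ℤ)) := by
        rw [hc3Z, hEZ, hc2Z]
        exact_mod_cast h1N
      have h2 : ((vv.choose (ρ+1) : ℤ) + ((vv.choose ρ : ℤ) - 1))
            * ((m.choose (k+1) : ℤ) - ((ρ+1).choose (k+1):ℤ))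
          ≤ ((m.choose (ρ+1) : ℤ) - 1) *
            (((vv.choose (k+1):ℤ) - (ρ.choose (k+1):ℤ)) + ((vv.choose k : ℤ) - (ρ.choose k:ℤ))) := by
        have hP1 : (vv.choose (ρ+1) : ℤ) + ((vv.choose ρ : ℤ) - 1) = ((vv+1).choose (ρ+1) : ℤ) - 1 := by
          have he : (vv+1).choose (ρ+1) = vv.choose ρ + vv.choose (ρ+1) := Nat.choose_succ_succ vv ρ
          rw [he]; push_cast; ring
        have hP2 : ((vv.choose (k+1):ℤ) - (ρ.choose (k+1):ℤ)) + ((vv.choose k : ℤ) - (ρ.choose k:ℤ))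
            = ((vv+1).choose (k+1) : ℤ) - ((ρ+1).choose (k+1) : ℤ) := by
          have e1 : (vv+1).choose (k+1) = vv.choose k + vv.choose (k+1) := Nat.choose_succ_succ vv k
          have e2 : (ρ+1).choose (k+1) = ρ.choose k + ρ.choose (k+1) := Nat.choose_succ_succ ρ k
          rw [e1, e2]; push_cast; ring
        have hA1Z : ((vv+1).choose (k+1) : ℤ) - ((ρ+1).choose (k+1) : ℤ)
            = ((∑ i ∈ Ico (ρ+1) (vv+1), i.choose k : ℕ) : ℤ) := by
          rw [ha_v1]; push_cast; ring
        have hB1Z : ((vv+1).choose (ρ+1) : ℤ) - 1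
            = ((∑ i ∈ Ico (ρ+1) (vv+1), i.choose ρ : ℕ) : ℤ) := by
          rw [hb_v1]; push_cast; ring
        rw [hP1, hP2, hA1Z, hc3Z, hEZ, hB1Z]
        exact_mod_cast hineq2v1
      -- apply starstar
      have hmain : ((vv.choose (ρ+1) : ℤ) + ((R sE : ℤ) - 1))
            * ((m.choose (k+1) : ℤ) - ((ρ+1).choose (k+1) : ℤ))
          ≤ ((m.choose (ρ+1) : ℤ) - 1)
            * (((vv.choose (k+1) : ℤ) - (ρ.choose (k+1) : ℤ)) + ((R u : ℤ) - (ρ.choose k : ℤ))) := by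
        refine SFQ2.starstar ?_ ?_ ?_ ?_ ?_ ?_ ?_ ?_ h1 h2
        · exact hIH
        · linarith only [hY]
        · linarith only [hβlb]
        · linarith only [hβub]
        · linarith only [hc1]
        · linarith only [hc3]
        · linarith only [hE]
        · positivity
      -- translate back
      rw [hstrip_eq, hRs, hRins]
      push_cast
      have hPas : ((ρ+1).choose (k+1) : ℤ) = (ρ.choose k : ℤ) + (ρ.choose (k+1) : ℤ) := by
        exact_mod_cast Nat.choose_succ_succ ρ k
      rw [hPas] at hmain ⊢
      ring_nf at hmain ⊢
      linarith only [hmain]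

end SFQ

namespace SFQ
open scoped FinsetFamily
variable {n : ℕ}

lemma R_strict_mono {s t : Finset (Fin n)} (hst : toColex s < toColex t)
    (hcard : #s = #t) : R s < R t := by
  have hsub : Colex.initSeg s ⊆ Colex.initSeg t := by
    intro u hu
    rw [Colex.mem_initSeg] at hu ⊢
    exact ⟨hcard ▸ hu.1, le_trans hu.2 (le_of_lt hst)⟩
  have hmem : t ∈ Colex.initSeg t := Colex.mem_initSeg_self
  have hnmem : t ∉ Colex.initSeg s := by
    rw [Colex.mem_initSeg]
    rintro ⟨-, hle⟩
    exact absurd (lt_of_le_of_lt hle hst) (lt_irrefl _)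
  exact Finset.card_lt_card ⟨hsub, fun h => hnmem (h hmem)⟩

lemma exists_R_eq {r b : ℕ} (hr : r ≤ n) (hb1 : 1 ≤ b) (hb2 : b ≤ n.choose r) :
    ∃ s : Finset (Fin n), #s = r ∧ R s = b := by
  classical
  have hcardT : #(powersetCard r (univ : Finset (Fin n))) = n.choose r := by
    rw [Finset.card_powersetCard, Finset.card_univ, Fintype.card_fin]
  have hmaps : ∀ (s : Finset (Fin n)) (_ : s ∈ powersetCard r univ),
      R s ∈ Finset.Icc 1 (n.choose r) := by
    intro s hs
    rw [Finset.mem_Icc]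
    have hcs : #s = r := (Finset.mem_powersetCard.mp hs).2
    refine ⟨R_pos s, ?_⟩
    have := R_le (s := s) (m := n) (fun x _ => x.isLt)
    rwa [hcs] at this
  have hinj : ∀ (s₁ s₂ : Finset (Fin n)) (h₁ : s₁ ∈ powersetCard r univ)
      (h₂ : s₂ ∈ powersetCard r univ), R s₁ = R s₂ → s₁ = s₂ := by
    intro s₁ s₂ h₁ h₂ hR
    by_contra hne
    have hcards : #s₁ = #s₂ := by
      rw [(Finset.mem_powersetCard.mp h₁).2, (Finset.mem_powersetCard.mp h₂).2]
    have hcne : toColex s₁ ≠ toColex s₂ := fun h => hne (by simpa using h)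
    rcases lt_or_gt_of_ne hcne with h | h
    · exact absurd hR (Nat.ne_of_lt (R_strict_mono h hcards))
    · exact absurd hR.symm (Nat.ne_of_lt (R_strict_mono h hcards.symm))
  have hcard_le : #(Finset.Icc 1 (n.choose r)) ≤ #(powersetCard r (univ : Finset (Fin n))) := by
    rw [hcardT, Nat.card_Icc]
    omega
  obtain ⟨s, hs, hbs⟩ := Finset.surj_on_of_inj_on_of_card_le (fun s _ => R s) hmaps hinj hcard_le
    b (Finset.mem_Icc.mpr ⟨hb1, hb2⟩)
  exact ⟨s, (Finset.mem_powersetCard.mp hs).2, hbs.symm⟩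

lemma key_bound {k : ℕ} (hk : 1 ≤ k) (hn : 2*k ≤ n) (A B : Finset (Finset (Fin n)))
    (hA : ∀ a ∈ A, #a = k) (hB : ∀ b ∈ B, #b = k) (hBne : B.Nonempty)
    (hcross : ∀ a ∈ A, ∀ b ∈ B, ¬ Disjoint a b) :
    ∃ s : Finset (Fin n), #s = n - k ∧ R s = #B ∧
      A.card + R (stripMin (n - 2*k) s) ≤ n.choose k := by
  classical
  have hkn : k ≤ n := by omega
  -- B has size between 1 and C(n, n-k)
  have hBsub : B ⊆ powersetCard k univ := fun b hb => mem_powersetCard_univ.mpr (hB b hb)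
  have hBcard : #B ≤ n.choose (n - k) := by
    have h1 : #B ≤ n.choose k := by
      calc #B ≤ #(powersetCard k (univ : Finset (Fin n))) := Finset.card_le_card hBsub
        _ = n.choose k := by rw [Finset.card_powersetCard, Finset.card_univ, Fintype.card_fin]
    rwa [Nat.choose_symm hkn]
  obtain ⟨s, hscard, hsR⟩ := exists_R_eq (r := n - k) (by omega)
    (Finset.card_pos.mpr hBne) hBcard
  refine ⟨s, hscard, hsR, ?_⟩
  -- the complement family
  have hsized : Set.Sized (n - k) (↑(Bᶜˢ) : Set (Finset (Fin n))) := by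
    intro c hc
    rw [Finset.mem_coe, Finset.mem_compls] at hc
    have h1 : #(cᶜ) = k := hB _ hc
    have h2 := Finset.card_add_card_compl (cᶜ)
    rw [compl_compl, h1, Fintype.card_fin] at h2
    omega
  have hkk := Finset.iterated_kk (k := n - 2*k) hsized
    (𝒞 := Colex.initSeg s)
    (by rw [Finset.card_compls]; exact le_of_eq (by rw [← hsR]; rfl))
    (by have := Colex.isInitSeg_initSeg (s := s); rwa [hscard] at this)
  rw [shadow_initSeg_iterate (by omega)] at hkk
  -- disjointness of A and the iterated shadow
  set D := ∂^[n - 2*k] (Bᶜˢ) with hD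
  have hdisj : Disjoint A D := by
    rw [Finset.disjoint_left]
    intro a haA haD
    rw [hD, Finset.mem_shadow_iterate_iff_exists_sdiff] at haD
    obtain ⟨c, hcB, hac, -⟩ := haD
    rw [Finset.mem_compls] at hcB
    refine hcross a haA cᶜ hcB ?_
    exact Finset.disjoint_of_subset_left hac disjoint_compl_right
  -- both live in level k
  have hAsub : A ⊆ powersetCard k univ := fun a ha => mem_powersetCard_univ.mpr (hA a ha)
  have hDsub : D ⊆ powersetCard k univ := by
    intro d hd
    rw [mem_powersetCard_univ]
    have := hsized.shadow_iterate (k := n - 2*k)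
    have hmem := this (Finset.mem_coe.mpr hd)
    rw [hmem]
    omega
  calc #A + R (stripMin (n - 2*k) s) ≤ #A + #D := by
        exact Nat.add_le_add_left hkk _
    _ = #(A ∪ D) := (Finset.card_union_of_disjoint hdisj).symm
    _ ≤ #(powersetCard k (univ : Finset (Fin n))) :=
        Finset.card_le_card (Finset.union_subset hAsub hDsub)
    _ = n.choose k := by rw [Finset.card_powersetCard, Finset.card_univ, Fintype.card_fin]

end SFQ

namespace SFQ
variable {n : ℕ}


/-- Final interpolation step, in a clean ℤ context. -/
lemma final_lp {a1 b Ph N M C0 t P Q : ℤ}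
    (hbound : a1 + Ph ≤ N)
    (hmaster : (b - 1) * (N - M - C0) ≤ (M - 1) * (Ph - C0))
    (hM2 : 2 ≤ M) (hb1 : 1 ≤ b) (hbM : b ≤ M) (ht : 2 ≤ t)
    (hNMC : C0 ≤ N - M)
    (hP : P = N - C0 + t - 1) (hQ : Q = t * M) :
    a1 + (t - 1) * b ≤ max P Q := by
  have hM1 : (0:ℤ) ≤ M - 1 := by linarith
  have h2 : (M - 1) * (a1 + Ph) ≤ (M - 1) * N := mul_le_mul_of_nonneg_left hbound hM1
  have hstep : (M - 1) * a1 ≤ (M - 1) * N - (M - 1) * C0 - (b - 1) * (N - M - C0) := by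
    nlinarith
  have htarget : (M - 1) * (a1 + (t - 1) * b) ≤ (M - b) * P + (b - 1) * Q := by
    rw [hP, hQ]
    nlinarith
  have hmax : (M - b) * P + (b - 1) * Q ≤ (M - 1) * max P Q := by
    have g1 : P ≤ max P Q := le_max_left _ _
    have g2 : Q ≤ max P Q := le_max_right _ _
    nlinarith
  have := le_trans htarget hmax
  have hM1' : (0:ℤ) < M - 1 := by linarith
  exact le_of_mul_le_mul_left this hM1'

set_option maxHeartbeats 2000000 in
theorem main_fin {k t : ℕ} (hk : 1 ≤ k) (hn : 2*k ≤ n) (ht : 2 ≤ t)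
    (A : Fin t → Finset (Finset (Fin n)))
    (hA : ∀ i, ∀ a ∈ A i, #a = k) (hne : ∀ i, (A i).Nonempty)
    (hcross : ∀ i j, i ≠ j → ∀ a ∈ A i, ∀ b ∈ A j, ¬ Disjoint a b) :
    ∑ i, #(A i) ≤ max (n.choose k - (n-k).choose k + t - 1) (t * (n-1).choose (k-1)) := by
  classical
  have htpos : 0 < t := by omega
  have huniv_ne : (univ : Finset (Fin t)).Nonempty := ⟨⟨0, htpos⟩, Finset.mem_univ _⟩
  obtain ⟨i0, -, hi0max⟩ := Finset.exists_max_image univ (fun i => #(A i)) huniv_ne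
  have herase_ne : (univ.erase i0).Nonempty := by
    rw [← Finset.card_pos, Finset.card_erase_of_mem (Finset.mem_univ _), Finset.card_univ,
      Fintype.card_fin]
    omega
  obtain ⟨j0, hj0mem, hj0max⟩ := Finset.exists_max_image (univ.erase i0)
    (fun i => #(A i)) herase_ne
  have hij : j0 ≠ i0 := Finset.ne_of_mem_erase hj0mem
  set a1 := #(A i0) with ha1
  set b := #(A j0) with hb
  have hba1 : b ≤ a1 := hi0max j0 (Finset.mem_univ _)
  have hb1 : 1 ≤ b := Finset.card_pos.mpr (hne j0)
  -- sum bound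
  have hsum : ∑ i, #(A i) ≤ a1 + (t-1) * b := by
    rw [← Finset.add_sum_erase _ _ (Finset.mem_univ i0)]
    refine Nat.add_le_add_left ?_ _
    calc ∑ i ∈ univ.erase i0, #(A i) ≤ #(univ.erase i0) • b :=
          Finset.sum_le_card_nsmul _ _ _ (fun i hi => hj0max i hi)
      _ = (t-1) * b := by
          rw [Finset.card_erase_of_mem (Finset.mem_univ _), Finset.card_univ, Fintype.card_fin,
            smul_eq_mul]
  -- key bound
  obtain ⟨s, hscard, hsR, hbound⟩ := key_bound hk hn (A i0) (A j0) (hA i0) (hA j0)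
    (hne j0) (fun a ha bb hbb => hcross i0 j0 (Ne.symm hij) a ha bb hbb)
  rw [← ha1] at hbound
  rw [← hb] at hsR
  set Ph := R (stripMin (n - 2*k) s) with hPh
  -- numeric abbreviations
  set N := n.choose k with hN
  set M := (n-1).choose (k-1) with hM
  set C0 := (n-k).choose k with hC0
  have hsne : s.Nonempty := Finset.card_pos.mp (by omega)
  have hNsplit : N = M + (n-1).choose k := by
    rw [hN, hM]
    have h1 : n = (n-1) + 1 := by omega
    have h2 : k = (k-1) + 1 := by omega
    rw [h1, h2, Nat.choose_succ_succ]
    rfl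
  have hsymm : (n-1).choose (n-k) = M := by
    rw [hM]
    have := Nat.choose_symm (n := n-1) (k := k-1) (by omega)
    have he : (n-1) - (k-1) = n - k := by omega
    rw [he] at this
    exact this
  have hC0le : C0 ≤ (n-1).choose k := Nat.choose_le_choose k (by omega)
  have hC0pos : 1 ≤ C0 := Nat.choose_pos (by omega)
  have hMpos : 1 ≤ M := Nat.choose_pos (by omega)
  have hPhC0 : C0 ≤ Ph := by
    have := R_strip_ge k (s := s) (by omega)
    rw [hscard] at this
    have he : n - k - k = n - 2*k := by omega
    rwa [he] at this
  by_cases htop : ∀ x ∈ s, (x : ℕ) < n - 1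
  · -- all of s below top: use master with m = n-1
    have hbM : b ≤ M := by
      have := R_le (s := s) (m := n - 1) htop
      rw [hscard, hsymm, hsR] at this
      exact this
    have hmaster := master k (r := n - k) (m := n - 1) (s := s) hscard (by omega) (by omega) htop
    have hstripeq : n - k - k = n - 2*k := by omega
    rw [hstripeq, hsR, hsymm] at hmaster
    -- case b = 1 : directly the left branch
    rcases eq_or_lt_of_le hb1 with hbeq | hb2
    · have ha1N : a1 + C0 ≤ N := le_trans (Nat.add_le_add_left hPhC0 _) hbound
      have : ∑ i, #(A i) ≤ N - C0 + t - 1 := by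
        rw [← hbeq] at hsum
        omega
      exact le_trans this (le_max_left _ _)
    · -- b ≥ 2, so M ≥ 2; interpolation argument in ℤ
      have hM2 : 2 ≤ M := le_trans hb2 hbM
      have hNC : (n-1).choose k = N - M := by omega
      rw [hNC] at hmaster
      rw [← hPh] at hmaster
      rw [← hC0] at hmaster
      have hC0N : C0 ≤ N := by omega
      -- ℤ facts
      have hNMC : (C0 : ℤ) ≤ (N : ℤ) - M := by
        have : C0 ≤ N - M := by omega
        omega
      rw [show ((N - M : ℕ) : ℤ) - (C0 : ℤ) = (N : ℤ) - M - C0 by omega] at hmaster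
      set P : ℤ := (N : ℤ) - C0 + t - 1 with hP
      set Q : ℤ := (t : ℤ) * M with hQ
      clear_value a1 b Ph N M C0
      have hboundZ : (a1 : ℤ) + (Ph : ℤ) ≤ (N : ℤ) := by exact_mod_cast hbound
      have hfin : (a1 : ℤ) + ((t:ℤ) - 1) * b ≤ max P Q := by
        refine final_lp hboundZ ?_ ?_ ?_ ?_ ?_ hNMC hP hQ
        · exact hmaster
        · exact_mod_cast hM2
        · exact_mod_cast hb1
        · exact_mod_cast hbM
        · exact_mod_cast ht
      -- back to ℕ
      have ht' : 1 ≤ t := by omega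
      have hcastS : ((a1 + (t-1)*b : ℕ) : ℤ) = (a1:ℤ) + ((t:ℤ)-1)*(b:ℤ) := by
        push_cast [Nat.cast_sub ht']
        ring
      have hPn : ((N - C0 + t - 1 : ℕ) : ℤ) = P := by rw [hP]; omega
      have hQn : ((t * M : ℕ) : ℤ) = Q := by rw [hQ]; push_cast; ring
      have hfinal : ((a1 + (t-1)*b : ℕ) : ℤ) ≤ ((max (N - C0 + t - 1) (t * M) : ℕ) : ℤ) := by
        rw [hcastS, Nat.cast_max, hPn, hQn]
        exact hfin
      exact le_trans hsum (Nat.cast_le.mp hfinal)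
  · -- s contains the top element: contradiction with b ≤ a1
    push_neg at htop
    obtain ⟨x, hxs, hxval⟩ := htop
    have hxtop : (x : ℕ) = n - 1 := by
      have := x.isLt
      omega
    have hvmax : ((s.max' hsne : Fin n) : ℕ) = n - 1 := by
      have h1 := s.le_max' x hxs
      have h2 := (s.max' hsne).isLt
      have h3 : (x : ℕ) ≤ ((s.max' hsne : Fin n) : ℕ) := h1
      omega
    -- R s ≥ M + 1
    have hRs_ge : M + 1 ≤ R s := by
      have hrec := R_rec hsne
      rw [hvmax, hscard] at hrec
      have h2 := R_pos (s.erase (s.max' hsne))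
      rw [hrec, hsymm]
      omega
    -- Ph ≥ C(n-1) k + 1
    have hPh_ge : (n-1).choose k + 1 ≤ Ph := by
      have hins := stripMin_insert_max hsne (d := n - 2*k) (by omega)
      have hvu : s.max' hsne ∉ stripMin (n - 2*k) (s.erase (s.max' hsne)) := fun h =>
        Finset.notMem_erase _ s (stripMin_subset h)
      have hallu : ∀ y ∈ stripMin (n - 2*k) (s.erase (s.max' hsne)), y < s.max' hsne :=
        fun y hy => lt_of_le_of_ne
          (s.le_max' y (Finset.mem_of_mem_erase (stripMin_subset hy)))
          (Finset.ne_of_mem_erase (stripMin_subset hy))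
      have hucard : #(stripMin (n - 2*k) (s.erase (s.max' hsne))) = k - 1 := by
        rw [stripMin_card]
        · rw [Finset.card_erase_of_mem (s.max'_mem hsne), hscard]
          omega
        · rw [Finset.card_erase_of_mem (s.max'_mem hsne), hscard]
          omega
      rw [hPh, hins, R_insert_max hvu hallu, hucard, hvmax]
      have hk1 : k - 1 + 1 = k := by omega
      rw [hk1]
      have := R_pos (stripMin (n - 2*k) (s.erase (s.max' hsne)))
      omega
    have : a1 + ((n-1).choose k + 1) ≤ N := le_trans (Nat.add_le_add_left hPh_ge _) hbound
    rw [hsR] at hRs_ge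
    omega

end SFQ


/-- Shi–Frankl–Qian bound for cross-intersecting families. -/
theorem stmt18 (n k t : ℕ) (hk : 1 ≤ k) (hn : 2 * k ≤ n) (ht : 2 ≤ t)
    (A : Fin t → Finset (Finset ℕ))
    (hA : ∀ i, A i ⊆ Finset.powersetCard k (Finset.Icc 1 n))
    (hne : ∀ i, (A i).Nonempty)
    (hcross : ∀ i j, i ≠ j → ∀ a ∈ A i, ∀ b ∈ A j, (a ∩ b).Nonempty) :
    ∑ i, (A i).card ≤
      max (Nat.choose n k - Nat.choose (n - k) k + t - 1)
        (t * Nat.choose (n - 1) (k - 1)) := by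
  classical
  have hn0 : 0 < n := by omega
  set f : ℕ → Fin n := fun x => ⟨(x - 1) % n, Nat.mod_lt _ hn0⟩ with hf
  have hfinj : ∀ x ∈ Finset.Icc 1 n, ∀ y ∈ Finset.Icc 1 n, f x = f y → x = y := by
    intro x hx y hy hxy
    rw [Finset.mem_Icc] at hx hy
    have h1 : (x - 1) % n = x - 1 := Nat.mod_eq_of_lt (by omega)
    have h2 : (y - 1) % n = y - 1 := Nat.mod_eq_of_lt (by omega)
    have := congrArg Fin.val hxy
    simp only [hf] at this
    rw [h1, h2] at this
    omega
  have himg_eq : ∀ a b : Finset ℕ, a ⊆ Finset.Icc 1 n → b ⊆ Finset.Icc 1 n →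
      a.image f = b.image f → a = b := by
    intro a b ha hb hab
    ext x
    constructor
    · intro hx
      have : f x ∈ b.image f := by rw [← hab]; exact Finset.mem_image_of_mem f hx
      obtain ⟨y, hy, hyx⟩ := Finset.mem_image.mp this
      rwa [hfinj y (hb hy) x (ha hx) hyx] at hy
    · intro hx
      have : f x ∈ a.image f := by rw [hab]; exact Finset.mem_image_of_mem f hx
      obtain ⟨y, hy, hyx⟩ := Finset.mem_image.mp this
      rwa [hfinj y (ha hy) x (hb hx) hyx] at hy
  set A' : Fin t → Finset (Finset (Fin n)) := fun i => (A i).image (fun a => a.image f) with hA'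
  have hsub : ∀ i, ∀ a ∈ A i, a ⊆ Finset.Icc 1 n ∧ #a = k := by
    intro i a ha
    exact Finset.mem_powersetCard.mp (hA i ha)
  have hA'sized : ∀ i, ∀ a' ∈ A' i, #a' = k := by
    intro i a' ha'
    obtain ⟨a, ha, rfl⟩ := Finset.mem_image.mp ha'
    obtain ⟨hsub1, hcard⟩ := hsub i a ha
    rw [Finset.card_image_of_injOn, hcard]
    intro x hx y hy hxy
    exact hfinj x (hsub1 hx) y (hsub1 hy) hxy
  have hA'card : ∀ i, #(A' i) = #(A i) := by
    intro i
    rw [hA']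
    apply Finset.card_image_of_injOn
    intro a ha b hb hab
    exact himg_eq a b (hsub i a ha).1 (hsub i b hb).1 hab
  have hA'ne : ∀ i, (A' i).Nonempty := fun i => (Finset.image_nonempty).mpr (hne i)
  have hA'cross : ∀ i j, i ≠ j → ∀ a' ∈ A' i, ∀ b' ∈ A' j, ¬ Disjoint a' b' := by
    intro i j hij a' ha' b' hb'
    obtain ⟨a, ha, rfl⟩ := Finset.mem_image.mp ha'
    obtain ⟨b, hb, rfl⟩ := Finset.mem_image.mp hb'
    obtain ⟨x, hx⟩ := hcross i j hij a ha b hb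
    rw [Finset.mem_inter] at hx
    rw [Finset.not_disjoint_iff]
    exact ⟨f x, Finset.mem_image_of_mem f hx.1, Finset.mem_image_of_mem f hx.2⟩
  have := SFQ.main_fin hk hn ht A' hA'sized hA'ne hA'cross
  calc ∑ i, #(A i) = ∑ i, #(A' i) := by
        refine Finset.sum_congr rfl fun i _ => ?_
        rw [hA'card]
    _ ≤ _ := this
end
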